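/- arXiv:0912.2919 — 9 statements merged into one kernel-verified Lean document; each statement's English description precedes it below -/
import Mathlib

section
/- Let t ≥ 1 be a real number and let n ≥ ⌈t⌉ + 2. Let π = (d_1 ≤ ... ≤ d_n) be a graphical sequence. If for every integer i with t ≤ i < tn/(t+1) we have d_⌊i/t⌋ ≥ i+1 or d_{n−i} ≥ n − ⌊i/t⌋, then every realization of π is t-tough. -/
open SimpleGraph

/-- Number of connected components of `G` after deleting the vertex set `X`. -/
noncomputable def delComp {V : Type*} (G : SimpleGraph V) (X : Set V) : ℕ :=
  Nat.card ((G.induce Xᶜ).ConnectedComponent)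

/-- `G` is `t`-tough. -/
def IsTough {V : Type*} [Fintype V] (t : ℝ) (G : SimpleGraph V) : Prop :=
  ∀ X : Finset V, 1 < delComp G ↑X → t * delComp G ↑X ≤ X.card

/-- Degree of a vertex. -/
noncomputable def ndeg {V : Type*} (G : SimpleGraph V) (v : V) : ℕ :=
  Nat.card {u | G.Adj v u}

/-- `G` is a realization of the sequence `d 1, …, d n` (1-based indexing). -/
def Realizes {V : Type*} (n : ℕ) (G : SimpleGraph V) (d : ℕ → ℕ) : Prop :=
  ∃ e : Fin n ≃ V, ∀ i : Fin n, ndeg G (e i) = d (i.1 + 1)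

/-- If at least `k ≥ 1` vertices have degree at most `x`, then `d k ≤ x`. -/
lemma count_le {n : ℕ} {d : ℕ → ℕ}
    (hmono : ∀ i j : ℕ, 1 ≤ i → i ≤ j → j ≤ n → d i ≤ d j)
    {G : SimpleGraph (Fin n)} (e : Fin n ≃ Fin n)
    (he : ∀ j : Fin n, ndeg G (e j) = d (j.1 + 1))
    {k x : ℕ} (hk : 1 ≤ k) (S : Finset (Fin n))
    (hS : ∀ v ∈ S, ndeg G v ≤ x) (hcard : k ≤ S.card) : d k ≤ x := by
  by_contra hx
  push_neg at hx
  have key : ∀ v ∈ S, (e.symm v).1 < k - 1 := by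
    intro v hv
    by_contra hkk
    push_neg at hkk
    have h1 : k ≤ (e.symm v).1 + 1 := by omega
    have h2 : (e.symm v).1 < n := (e.symm v).2
    have h3 := hmono k ((e.symm v).1 + 1) hk h1 (by omega)
    have hd : ndeg G v = d ((e.symm v).1 + 1) := by
      have := he (e.symm v)
      rwa [Equiv.apply_symm_apply] at this
    have := hS v hv
    omega
  have hsub : ∀ v ∈ S, (e.symm v).1 ∈ Finset.range (k - 1) := by
    intro v hv
    exact Finset.mem_range.mpr (key v hv)
  have hinj : Set.InjOn (fun v => (e.symm v).1) S := by
    intro a _ b _ hab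
    exact e.symm.injective (Fin.val_injective hab)
  have := Finset.card_le_card_of_injOn _ hsub hinj
  rw [Finset.card_range] at this
  omega

set_option maxHeartbeats 1000000 in
theorem stmt0 (t : ℝ) (ht : 1 ≤ t) (n : ℕ) (hn : (⌈t⌉ : ℝ) + 2 ≤ (n : ℝ))
    (d : ℕ → ℕ)
    (hmono : ∀ i j : ℕ, 1 ≤ i → i ≤ j → j ≤ n → d i ≤ d j)
    (hgraph : ∃ G : SimpleGraph (Fin n), Realizes n G d)
    (hcond : ∀ i : ℕ, t ≤ (i : ℝ) → (i : ℝ) < t * n / (t + 1) →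
      i + 1 ≤ d ⌊(i : ℝ) / t⌋₊ ∨ n - ⌊(i : ℝ) / t⌋₊ ≤ d (n - i)) :
    ∀ G : SimpleGraph (Fin n), Realizes n G d → IsTough t G := by
  classical
  rintro G ⟨e, he⟩ X hw
  by_contra hc
  push_neg at hc
  have ht0 : (0:ℝ) < t := by linarith
  set m := X.card with hm
  set K : Set (Fin n) := (↑X : Set (Fin n))ᶜ with hK
  set G' := G.induce K with hG'
  letI : Fintype G'.ConnectedComponent := Fintype.ofFinite _
  have hdel : delComp G ↑X = Fintype.card G'.ConnectedComponent := by
    rw [delComp, Nat.card_eq_fintype_card]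
  set w := Fintype.card G'.ConnectedComponent with hwdef
  rw [hdel] at hw hc
  -- hw : 1 < w, hc : ↑m < t * ↑w
  -- component sizes
  set mkc : K → G'.ConnectedComponent := fun x => G'.connectedComponentMk x with hmkc
  set c : G'.ConnectedComponent → ℕ :=
    fun C => (Finset.univ.filter (fun x : K => mkc x = C)).card with hcdef
  have hsum : ∑ C, c C = Fintype.card K := by
    rw [← Finset.card_univ (α := K)]
    exact (Finset.card_eq_sum_card_fiberwise (fun x _ => Finset.mem_univ (mkc x))).symm
  have hKcard : Fintype.card K + m = n := by
    have h2 : Fintype.card K = (Xᶜ : Finset (Fin n)).card := by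
      rw [← Set.toFinset_card]
      congr 1
      ext v
      simp [hK]
    rw [h2, hm]
    have := Finset.card_compl_add_card X
    simpa using this
  have hc1 : ∀ C, 1 ≤ c C := by
    intro C
    obtain ⟨x, hx⟩ := C.exists_rep
    have hxm : x ∈ Finset.univ.filter (fun y : K => mkc y = C) := by
      rw [Finset.mem_filter]
      refine ⟨Finset.mem_univ _, ?_⟩
      rw [hmkc]
      exact hx
    rw [hcdef]
    exact Finset.card_pos.mpr ⟨x, hxm⟩
  have hΓne : (Finset.univ : Finset G'.ConnectedComponent).Nonempty := by
    rw [← Finset.card_pos, Finset.card_univ]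
    omega
  obtain ⟨Cm, _, hCm⟩ := Finset.exists_max_image Finset.univ c hΓne
  set Γ' := (Finset.univ : Finset G'.ConnectedComponent).erase Cm with hΓ'
  have hΓ'card : Γ'.card + 1 = w := by
    rw [hΓ', Finset.card_erase_of_mem (Finset.mem_univ _), Finset.card_univ]
    omega
  have hΓ'ne : Γ'.Nonempty := by
    rw [← Finset.card_pos]
    omega
  obtain ⟨C₂, hC₂mem, hC₂⟩ := Finset.exists_max_image Γ' c hΓ'ne
  set N := ∑ C ∈ Γ', c C with hNdef
  have hsum2 : c Cm + N = Fintype.card K := by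
    rw [hNdef, hΓ', Finset.add_sum_erase _ c (Finset.mem_univ Cm), hsum]
  have hN1 : c C₂ + (w - 2) ≤ N := by
    rw [hNdef, ← Finset.add_sum_erase _ c hC₂mem]
    have h3 : (Γ'.erase C₂).card • 1 ≤ ∑ C ∈ Γ'.erase C₂, c C :=
      Finset.card_nsmul_le_sum _ _ _ (fun y _ => hc1 y)
    rw [Finset.card_erase_of_mem hC₂mem] at h3
    simp only [smul_eq_mul, mul_one] at h3
    omega
  -- degree bound
  have hdeg : ∀ x : K, ndeg G x.1 + 1 ≤ m + c (mkc x) := by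
    intro x
    have hsub : insert (x : Fin n) (G.neighborSet x) ⊆
        (↑X : Set (Fin n)) ∪ (Subtype.val ''
          (↑(Finset.univ.filter (fun y : K => mkc y = mkc x)) : Set K)) := by
      intro u hu
      rcases Set.mem_insert_iff.mp hu with rfl | hadjU
      · right
        exact ⟨x, by simp, rfl⟩
      · by_cases hX : u ∈ X
        · left; exact hX
        · right
          have huK : u ∈ K := by simp [hK, hX]
          refine ⟨⟨u, huK⟩, ?_, rfl⟩
          have hadj2 : G'.Adj x ⟨u, huK⟩ := by
            rw [hG']
            simpa [comap_adj] using hadjU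
          simp only [Finset.coe_filter, Finset.mem_univ, true_and, Set.mem_setOf_eq]
          exact (ConnectedComponent.sound hadj2.reachable).symm
    have h1 : (insert (x : Fin n) (G.neighborSet ↑x)).ncard
        = (G.neighborSet ↑x).ncard + 1 :=
      Set.ncard_insert_of_notMem (by simp) (Set.toFinite _)
    have h3 := Set.ncard_le_ncard hsub (Set.toFinite _)
    have h2 : ((↑X : Set (Fin n)) ∪ (Subtype.val ''
        (↑(Finset.univ.filter (fun y : K => mkc y = mkc x)) : Set K))).ncard
        ≤ m + c (mkc x) := by
      refine le_trans (Set.ncard_union_le _ _) ?_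
      have hA : (↑X : Set (Fin n)).ncard = m := Set.ncard_coe_finset X
      have hB : (Subtype.val ''
          (↑(Finset.univ.filter (fun y : K => mkc y = mkc x)) : Set K)).ncard
          = c (mkc x) := by
        rw [Set.ncard_image_of_injective _ Subtype.val_injective, Set.ncard_coe_finset]
      omega
    have hnd : ndeg G ↑x = (G.neighborSet ↑x).ncard := by
      rw [ndeg]
      exact Nat.card_coe_set_eq _
    omega
  -- the set of vertices away from the largest component
  set SAK := Finset.univ.filter (fun x : K => mkc x ≠ Cm) with hSAK
  have hSAcard : SAK.card = N := by
    have h0 : ∀ x ∈ SAK, mkc x ∈ Γ' := by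
      intro x hx
      have : mkc x ≠ Cm := by simpa [hSAK] using hx
      exact Finset.mem_erase.mpr ⟨this, Finset.mem_univ _⟩
    rw [Finset.card_eq_sum_card_fiberwise h0, hNdef]
    refine Finset.sum_congr rfl ?_
    intro C hC
    have hCne : C ≠ Cm := (Finset.mem_erase.mp hC).1
    have hfe : SAK.filter (fun x => mkc x = C)
        = Finset.univ.filter (fun x : K => mkc x = C) := by
      ext y
      simp only [hSAK, Finset.mem_filter, Finset.mem_univ, true_and]
      constructor
      · rintro ⟨_, h⟩; exact h
      · intro h; exact ⟨by rw [h]; exact hCne, h⟩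
    rw [hfe, hcdef]
  -- numeric setup
  obtain ⟨c₂', hc₂'⟩ : ∃ a, c C₂ = a + 1 := ⟨c C₂ - 1, by have := hc1 C₂; omega⟩
  obtain ⟨cm', hcm'⟩ : ∃ a, c Cm = a + 1 := ⟨c Cm - 1, by have := hc1 Cm; omega⟩
  have hc₂cm : c C₂ ≤ c Cm := hCm C₂ (Finset.mem_univ _)
  have hKN : cm' + 1 + N + m = n := by omega
  have hN1' : c₂' + w ≤ N + 1 := by omega
  clear hsum hsum2 hN1 hΓ'card hdel hΓne hc1 hC₂mem
  clear_value m w mkc c SAK N Γ'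
  set ct := ⌈t⌉₊ with hct
  -- real facts about ct
  have hct1 : t ≤ (ct : ℝ) := Nat.le_ceil t
  have hct2 : (ct : ℝ) < t + 1 := Nat.ceil_lt_add_one (by linarith)
  have hnct : (ct : ℝ) + 2 ≤ (n : ℝ) := by
    have h0 : (0:ℤ) ≤ ⌈t⌉ := Int.ceil_nonneg (by linarith)
    have h2 : ((⌈t⌉.toNat : ℕ) : ℝ) = ((⌈t⌉ : ℤ) : ℝ) := by
      rw [← Int.cast_natCast, Int.toNat_of_nonneg h0]
    have h1 : ct ≤ ⌈t⌉.toNat := by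
      rw [hct]
      refine Nat.ceil_le.mpr ?_
      rw [h2]
      exact Int.le_ceil t
    have h3 : ((ct : ℕ) : ℝ) ≤ ((⌈t⌉.toNat : ℕ) : ℝ) := by exact_mod_cast h1
    rw [h2] at h3
    linarith
  set i := max ct (m + c₂') with hidef
  have hcti : ct ≤ i := le_max_left _ _
  have hm2i : m + c₂' ≤ i := le_max_right _ _
  clear_value ct i
  set h := ⌊(i : ℝ) / t⌋₊ with hh
  have hhle : (h : ℝ) ≤ (i : ℝ) / t := Nat.floor_le (div_nonneg (Nat.cast_nonneg _) ht0.le)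
  have hh1 : 1 ≤ h := by
    rw [hh]
    refine Nat.le_floor ?_
    rw [Nat.cast_one, le_div_iff₀ ht0, one_mul]
    refine le_trans hct1 ?_
    exact_mod_cast hcti
  clear_value h
  have hti : t ≤ (i : ℝ) := by
    refine le_trans hct1 ?_
    exact_mod_cast hcti
  -- (T2) : (t+1) * i < t * n
  have hT2 : (t + 1) * (i : ℝ) < t * n := by
    have hn2 : m + 2 * c₂' + w ≤ n := by omega
    have hn2R : (m : ℝ) + 2 * c₂' + w ≤ (n : ℝ) := by exact_mod_cast hn2
    have hwR : (2 : ℝ) ≤ (w : ℝ) := by exact_mod_cast hw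
    have hc₂'0 : (0:ℝ) ≤ (c₂' : ℝ) := Nat.cast_nonneg _
    rcases max_choice ct (m + c₂') with hmax | hmax
    · rw [hidef, hmax]
      nlinarith [mul_le_mul_of_nonneg_left hnct ht0.le]
    · rw [hidef, hmax]
      push_cast
      nlinarith [mul_le_mul_of_nonneg_left hn2R ht0.le,
        mul_nonneg (sub_nonneg.mpr ht) hc₂'0]
  -- h ≤ N
  have hiN : (i : ℝ) < t * ((N : ℝ) + 1) := by
    have hNge1 : 1 ≤ N := by omega
    have hNR : (1:ℝ) ≤ (N : ℝ) := by exact_mod_cast hNge1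
    have hc₂'0 : (0:ℝ) ≤ (c₂' : ℝ) := Nat.cast_nonneg _
    rcases max_choice ct (m + c₂') with hmax | hmax
    · rw [hidef, hmax]
      nlinarith [mul_nonneg (sub_nonneg.mpr ht) (sub_nonneg.mpr hNR)]
    · rw [hidef, hmax]
      push_cast
      have hN1R : (c₂' : ℝ) + w ≤ (N : ℝ) + 1 := by exact_mod_cast hN1'
      nlinarith [mul_le_mul_of_nonneg_left hN1R ht0.le,
        mul_nonneg (sub_nonneg.mpr ht) hc₂'0]
  have hhN : h ≤ N := by
    have : (i : ℝ) / t < (N : ℝ) + 1 := (div_lt_iff₀ ht0).mpr (by linarith [hiN])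
    have h2 : (h : ℝ) < (N : ℝ) + 1 := lt_of_le_of_lt hhle this
    have h3 : h < N + 1 := by exact_mod_cast h2
    omega
  have hin : i < n := by
    have hi0 : (0:ℝ) ≤ (i : ℝ) := Nat.cast_nonneg _
    have : (i : ℝ) < (n : ℝ) := by nlinarith
    exact_mod_cast this
  have hmi : m ≤ i := le_trans (Nat.le_add_right m c₂') hm2i
  -- counting A : d h ≤ i
  have hdh : d h ≤ i := by
    refine count_le hmono e he hh1 (SAK.image Subtype.val) ?_ ?_
    · intro v hv
      obtain ⟨y, hy, rfl⟩ := Finset.mem_image.mp hv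
      have hyne : mkc y ≠ Cm := by simpa [hSAK] using hy
      have hyc : c (mkc y) ≤ c C₂ := by
        refine hC₂ (mkc y) ?_
        rw [hΓ']
        exact Finset.mem_erase.mpr ⟨hyne, Finset.mem_univ _⟩
      have hdℕ : ndeg G ↑y + 1 ≤ m + c (mkc y) := hdeg y
      omega
    · rw [Finset.card_image_of_injective _ Subtype.val_injective, hSAcard]
      exact hhN
  -- counting B : d (n - i) ≤ n - (h+1)
  have hXcc : (Xᶜ : Finset (Fin n)).card + m = n := by
    rw [hm]
    have := Finset.card_compl_add_card X
    simpa using this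
  have hdB : d (n - i) ≤ n - (h + 1) := by
    refine count_le hmono e he (by omega) Xᶜ ?_ ?_
    · intro v hv
      have hvK : v ∈ K := by
        simp only [hK, Set.mem_compl_iff, Finset.mem_coe]
        exact Finset.mem_compl.mp hv
      have hd : ndeg G v + 1 ≤ m + c (mkc ⟨v, hvK⟩) := hdeg ⟨v, hvK⟩
      have hcc : c (mkc ⟨v, hvK⟩) ≤ c Cm := hCm _ (Finset.mem_univ _)
      omega
    · omega
  -- apply hcond
  have hrange : (i : ℝ) < t * n / (t + 1) := by
    rw [lt_div_iff₀ (by linarith : (0:ℝ) < t + 1)]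
    linarith [hT2]
  rcases hcond i hti hrange with hA | hB
  · rw [← hh] at hA
    omega
  · rw [← hh] at hB
    omega
end

section
/- Let t ≥ 1, n ≥ ⌈t⌉ + 2, and let i be an integer with t ≤ i < tn/(t+1). Then the graph G = K_i + (complement of K_⌊i/t⌋ ∪ K_{n−i−⌊i/t⌋}) (the join of a complete graph on i vertices with the disjoint union of ⌊i/t⌋ isolated vertices and a clique on n−i−⌊i/t⌋ vertices) is not t-tough. -/
open SimpleGraph

theorem stmt1 (t : ℝ) (ht : 1 ≤ t) (n : ℕ) (hn : (⌈t⌉ : ℝ) + 2 ≤ (n : ℝ))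
    (i : ℕ) (hti : t ≤ (i : ℝ)) (hi : (i : ℝ) < t * n / (t + 1)) :
    -- the graph `K_i + (complement K_{⌊i/t⌋} ∪ K_{n-i-⌊i/t⌋})` on vertex set `Fin n`:
    -- the first `i` vertices form a clique joined to everything, the next `⌊i/t⌋`
    -- vertices are independent, and the last `n - i - ⌊i/t⌋` vertices form a clique.
    ¬ IsTough t (SimpleGraph.fromRel (fun u v : Fin n =>
      u.1 < i ∨ v.1 < i ∨ (i + ⌊(i : ℝ) / t⌋₊ ≤ u.1 ∧ i + ⌊(i : ℝ) / t⌋₊ ≤ v.1))) := by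
  have ht0 : (0 : ℝ) < t := lt_of_lt_of_le one_pos ht
  set f := ⌊(i : ℝ) / t⌋₊ with hf
  set G := SimpleGraph.fromRel (fun u v : Fin n =>
      u.1 < i ∨ v.1 < i ∨ (i + f ≤ u.1 ∧ i + f ≤ v.1)) with hG
  have hf1 : 1 ≤ f := Nat.le_floor (by rw [le_div_iff₀ ht0]; simpa using hti)
  have hfle : (f : ℝ) ≤ (i : ℝ) / t := Nat.floor_le (by positivity)
  have hflt : (i : ℝ) / t < f + 1 := Nat.lt_floor_add_one _
  have hi' : (i : ℝ) * (t + 1) < t * n := by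
    rw [lt_div_iff₀ (by linarith)] at hi; linarith
  have hin : i + f < n := by
    have h1 : (i : ℝ) + f < n := by
      rw [le_div_iff₀ ht0] at hfle
      nlinarith
    exact_mod_cast (by push_cast; exact h1 : ((i + f : ℕ) : ℝ) < (n : ℕ))
  have hiltn : i ≤ n := by omega
  -- the cutset
  set X : Finset (Fin n) :=
    (Finset.univ : Finset (Fin i)).map ⟨Fin.castLE hiltn, Fin.castLE_injective hiltn⟩ with hX
  have hXmem : ∀ v : Fin n, v ∈ X ↔ v.1 < i := by
    intro v
    constructor
    · rintro hv
      simp only [hX, Finset.mem_map, Finset.mem_univ, true_and] at hv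
      obtain ⟨a, ha⟩ := hv
      rw [← ha]
      exact a.2
    · intro hv
      simp only [hX, Finset.mem_map, Finset.mem_univ, true_and]
      exact ⟨⟨v.1, hv⟩, by ext; rfl⟩
  have hXcard : X.card = i := by simp [hX]
  have hSmem : ∀ v : Fin n, v ∈ (↑X : Set (Fin n))ᶜ ↔ i ≤ v.1 := by
    intro v
    simp only [Set.mem_compl_iff, Finset.mem_coe, hXmem, not_lt]
  -- the induced graph
  set H := G.induce (↑X : Set (Fin n))ᶜ with hH
  have hadj : ∀ u v : ↥(↑X : Set (Fin n))ᶜ, H.Adj u v →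
      ((u : Fin n) ≠ (v : Fin n) ∧ i + f ≤ (u : Fin n).1 ∧ i + f ≤ (v : Fin n).1) := by
    intro u v huv
    have hu := (hSmem u.1).mp u.2
    have hv := (hSmem v.1).mp v.2
    simp only [hH, comap_adj, Function.Embedding.coe_subtype, hG, fromRel_adj] at huv
    obtain ⟨hne, h | h⟩ := huv
    · exact ⟨hne, by omega⟩
    · exact ⟨hne, by omega⟩
  -- the labeling map
  set gfun : ↥(↑X : Set (Fin n))ᶜ → Fin (f + 1) := fun v =>
    if h : (v : Fin n).1 < i + f then ⟨(v : Fin n).1 - i, by omega⟩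
    else ⟨f, by omega⟩ with hgfun
  have key : ∀ (v w : ↥(↑X : Set (Fin n))ᶜ) (p : H.Walk v w), gfun v = gfun w := by
    intro v w p
    induction p with
    | nil => rfl
    | @cons a b c h p ih =>
      obtain ⟨-, ha, hb⟩ := hadj _ _ h
      rw [← ih]
      simp only [hgfun]
      rw [dif_neg (by omega), dif_neg (by omega)]
  -- the equivalence
  have e : H.ConnectedComponent ≃ Fin (f + 1) :=
    { toFun := ConnectedComponent.lift gfun (fun v w p _ => key v w p)
      invFun := fun k => H.connectedComponentMk
        ⟨⟨i + k.1, by have := k.isLt; omega⟩, (hSmem _).mpr (Nat.le_add_right _ _)⟩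
      left_inv := by
        refine ConnectedComponent.ind fun v => ?_
        rw [ConnectedComponent.lift_mk]
        have hvi : i ≤ (v : Fin n).1 := (hSmem _).mp v.2
        by_cases hv : (v : Fin n).1 < i + f
        · have hg : gfun v = ⟨(v : Fin n).1 - i, by omega⟩ := by simp only [hgfun]; rw [dif_pos hv]
          rw [hg]
          apply congrArg
          apply Subtype.ext
          apply Fin.ext
          show i + ((v : Fin n).1 - i) = (v : Fin n).1
          omega
        · have hg : gfun v = ⟨f, by omega⟩ := by simp only [hgfun]; rw [dif_neg hv]
          rw [hg]
          by_cases hvf : (v : Fin n).1 = i + f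
          · apply congrArg
            apply Subtype.ext
            apply Fin.ext
            show i + f = (v : Fin n).1
            omega
          · apply ConnectedComponent.connectedComponentMk_eq_of_adj
            simp only [hH, comap_adj, Function.Embedding.coe_subtype, hG, fromRel_adj]
            refine ⟨?_, Or.inl (Or.inr (Or.inr ⟨le_refl _, by omega⟩))⟩
            intro hcon
            have h3 : i + f = (v : Fin n).1 := congrArg Fin.val hcon
            omega
      right_inv := by
        intro k
        rw [ConnectedComponent.lift_mk]
        simp only [hgfun]
        have := k.isLt
        by_cases hk : i + k.1 < i + f
        · rw [dif_pos hk]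
          apply Fin.ext
          show i + k.1 - i = k.1
          omega
        · rw [dif_neg hk]
          apply Fin.ext
          show f = k.1
          omega }
  have hcount : delComp G (↑X : Set (Fin n)) = f + 1 := by
    rw [delComp, ← hH, Nat.card_congr e, Nat.card_eq_fintype_card, Fintype.card_fin]
  intro htough
  have := htough X (by rw [hG] at hcount ⊢; rw [hcount]; omega)
  rw [hG] at hcount
  rw [hcount, hXcard] at this
  have hibig : (i : ℝ) < t * ((f : ℝ) + 1) := by
    rw [div_lt_iff₀ ht0] at hflt
    nlinarith
  push_cast at this
  linarith
end

section
/- Let t ≥ 1 and let G be a graph on n ≥ ⌈t⌉ + 2 vertices that is not t-tough. Let X ⊆ V(G) be maximal with respect to the properties ω(G−X) ≥ 2 and |X|/ω(G−X) < t. Then |X| ≥ t. -/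
open SimpleGraph

/-- Hom between induced graphs on nested sets. -/
def induceIncl {V : Type*} (G : SimpleGraph V) {s u : Set V} (h : s ⊆ u) :
    G.induce s →g G.induce u :=
  ⟨fun v => ⟨v.1, h v.2⟩, fun hadj => hadj⟩

theorem stmt2 (t : ℝ) (ht : 1 ≤ t) (n : ℕ) (hn : (⌈t⌉ : ℝ) + 2 ≤ (n : ℝ))
    (G : SimpleGraph (Fin n)) (hG : ¬ IsTough t G)
    (X : Finset (Fin n))
    (hω : 2 ≤ delComp G ↑X)
    (hlt : (X.card : ℝ) / (delComp G ↑X : ℝ) < t)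
    (hmax : ∀ Y : Finset (Fin n), X ⊆ Y → 2 ≤ delComp G ↑Y →
      (Y.card : ℝ) / (delComp G ↑Y : ℝ) < t → Y = X) :
    t ≤ (X.card : ℝ) := by
  by_contra h
  push_neg at h
  -- X.card + 1 ≤ ⌈t⌉
  have hXceil : (X.card : ℝ) + 1 ≤ (⌈t⌉ : ℝ) := by
    have : (X.card : ℤ) < ⌈t⌉ := by
      exact_mod_cast lt_of_lt_of_le h (Int.le_ceil t)
    exact_mod_cast this
  have hcard3 : X.card + 3 ≤ n := by
    have : (X.card : ℝ) + 3 ≤ (n : ℝ) := by linarith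
    exact_mod_cast this
  -- two vertices in distinct components of G.induce Xᶜ
  have hnontriv : Nontrivial ((G.induce (↑X : Set (Fin n))ᶜ).ConnectedComponent) := by
    rw [← Finite.one_lt_card_iff_nontrivial]
    exact hω
  obtain ⟨C, D, hCD⟩ := hnontriv
  obtain ⟨a, rfl⟩ := C.exists_rep
  obtain ⟨b, rfl⟩ := D.exists_rep
  -- pick a third vertex c outside X, distinct from a.1 and b.1
  have hcompl : 3 ≤ Xᶜ.card := by
    have := Finset.card_compl (X : Finset (Fin n))
    rw [this, Fintype.card_fin]
    omega
  obtain ⟨c, hc⟩ : (Xᶜ \ {a.1, b.1} : Finset (Fin n)).Nonempty := by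
    apply Finset.card_pos.mp
    have := Finset.le_card_sdiff ({a.1, b.1} : Finset (Fin n)) Xᶜ
    have h2 : ({a.1, b.1} : Finset (Fin n)).card ≤ 2 := Finset.card_insert_le _ _
    omega
  rw [Finset.mem_sdiff, Finset.mem_compl, Finset.mem_insert, Finset.mem_singleton] at hc
  push_neg at hc
  obtain ⟨hcX, hca, hcb⟩ := hc
  set Y : Finset (Fin n) := insert c X with hY
  have hXY : X ⊆ Y := Finset.subset_insert _ _
  have hYcard : Y.card = X.card + 1 := Finset.card_insert_of_notMem hcX
  -- Yᶜ ⊆ Xᶜ as sets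
  have hsub : ((↑Y : Set (Fin n))ᶜ) ⊆ ((↑X : Set (Fin n))ᶜ) := by
    apply Set.compl_subset_compl.mpr
    exact_mod_cast hXY
  -- a, b are in Yᶜ
  have haY : a.1 ∈ ((↑Y : Set (Fin n))ᶜ) := by
    simp only [hY, Finset.coe_insert, Set.mem_compl_iff, Set.mem_insert_iff]
    push_neg
    exact ⟨fun hh => hca hh.symm, a.2⟩
  have hbY : b.1 ∈ ((↑Y : Set (Fin n))ᶜ) := by
    simp only [hY, Finset.coe_insert, Set.mem_compl_iff, Set.mem_insert_iff]
    push_neg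
    exact ⟨fun hh => hcb hh.symm, b.2⟩
  have hne : ((G.induce ((↑Y : Set (Fin n))ᶜ)).connectedComponentMk ⟨a.1, haY⟩) ≠
      (G.induce ((↑Y : Set (Fin n))ᶜ)).connectedComponentMk ⟨b.1, hbY⟩ := by
    intro he
    apply hCD
    have h2 := congrArg (ConnectedComponent.map (induceIncl G hsub)) he
    rw [ConnectedComponent.map_mk, ConnectedComponent.map_mk] at h2
    exact h2
  have hωY : 2 ≤ delComp G ↑Y := by
    rw [delComp, show (2 : ℕ) = 1 + 1 from rfl, Nat.add_one_le_iff,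
      Finite.one_lt_card_iff_nontrivial]
    exact ⟨_, _, hne⟩
  have hωYpos : (0 : ℝ) < (delComp G ↑Y : ℝ) := by positivity
  have hltY : (Y.card : ℝ) / (delComp G ↑Y : ℝ) < t := by
    rw [div_lt_iff₀ hωYpos]
    have h2 : (2 : ℝ) ≤ (delComp G ↑Y : ℝ) := by exact_mod_cast hωY
    have : (Y.card : ℝ) = (X.card : ℝ) + 1 := by rw [hYcard]; push_cast; ring
    rw [this]
    nlinarith
  have := hmax Y hXY hωY hltY
  have : c ∈ X := this ▸ Finset.mem_insert_self c X
  exact hcX this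
end

section
/- Let P be an increasing graph property, and let π be a sink of the P-subposet of the n-degree-poset (i.e., a maximal element under majorization among degree sequences of edge-maximal non-P graphs on n vertices). If π violates a P-weakly-optimal Chvátal-type condition c, then c is equivalent to C(π), i.e., Π(c) = π. -/
open SimpleGraph

/-- `G` (a graph on `Fin n`) realizes the sequence `π`. -/
def RealizesF {n : ℕ} (G : SimpleGraph (Fin n)) (π : Fin n → ℕ) : Prop :=
  ∃ e : Equiv.Perm (Fin n), ∀ i, ndeg G (e i) = π i

/-- A Chvátal-type condition `d_{i_1} ≥ k_{i_1} ∨ … ∨ d_{i_r} ≥ k_{i_r}`. -/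
structure ChvatalCond (n : ℕ) where
  idx : Finset (Fin n)
  bound : Fin n → ℕ
  idx_nonempty : idx.Nonempty
  bound_mono : ∀ i ∈ idx, ∀ j ∈ idx, i ≤ j → bound i ≤ bound j
  bound_range : ∀ i ∈ idx, 1 ≤ bound i ∧ bound i ≤ n

/-- A sequence `d` satisfies a Chvátal-type condition. -/
def ChvatalCond.Sat {n : ℕ} (c : ChvatalCond n) (d : Fin n → ℕ) : Prop :=
  ∃ i ∈ c.idx, c.bound i ≤ d i

/-- `G` is edge-maximal without the (increasing) property `P`. -/
def EdgeMaxNon {n : ℕ} (P : SimpleGraph (Fin n) → Prop) (G : SimpleGraph (Fin n)) : Prop :=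
  ¬ P G ∧ ∀ H, G < H → P H

/-- `π` is a sink of the `P`-subposet: it is the (nondecreasing) degree sequence of an
edge-maximal non-`P` graph and is maximal under majorization among such sequences. -/
def IsSink (n : ℕ) (P : SimpleGraph (Fin n) → Prop) (π : Fin n → ℕ) : Prop :=
  Monotone π ∧ (∃ G, EdgeMaxNon P G ∧ RealizesF G π) ∧
    ∀ π' : Fin n → ℕ, Monotone π' → (∃ G, EdgeMaxNon P G ∧ RealizesF G π') →
      π ≤ π' → π' = π

/-- `c` is `P`-weakly-optimal: every nondecreasing `n`-sequence violating `c` is majorized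
by a graphical sequence having a realization without property `P`. -/
def WeaklyOpt (n : ℕ) (P : SimpleGraph (Fin n) → Prop) (c : ChvatalCond n) : Prop :=
  ∀ d : Fin n → ℕ, Monotone d → (∀ j, d j ≤ n - 1) → ¬ c.Sat d →
    ∃ π' : Fin n → ℕ, Monotone π' ∧ d ≤ π' ∧ ∃ G, RealizesF G π' ∧ ¬ P G

/-
Weak optimality applied to Π(c) (which violates `c`) gives a non-`P` graph whose
degree sequence majorizes Π(c); enlarging it to an edge-maximal non-`P` graph only
increases degrees. Since `π` violates `c` we have `π ≤ Π(c)`, so the sink `π` is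
majorized by that edge-maximal degree sequence, hence equals it, which squeezes
`Π(c) = π`. On nondecreasing sequences bounded by `n - 1`, violating `c` means being
majorized by Π(c), so `c` holds iff some `d j` exceeds `π j`.
-/

section Degree

variable {V : Type*} (G : SimpleGraph V)

lemma ndeg_eq_degree [Fintype V] [DecidableRel G.Adj] (v : V) : ndeg G v = G.degree v := by
  rw [ndeg, ← card_neighborSet_eq_degree, Nat.card_eq_fintype_card]
  rfl

lemma ndeg_lt_card [Fintype V] (v : V) : ndeg G v < Fintype.card V := by
  classical
  exact ndeg_eq_degree G v ▸ G.degree_lt_card_verts v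

lemma ndeg_mono [Finite V] {G H : SimpleGraph V} (h : G ≤ H) (v : V) : ndeg G v ≤ ndeg H v :=
  Set.ncard_le_ncard (fun _ hu => h hu) (Set.toFinite _)

end Degree

lemma RealizesF.le_sub_one {n : ℕ} {G : SimpleGraph (Fin n)} {π : Fin n → ℕ}
    (h : RealizesF G π) (j : Fin n) : π j ≤ n - 1 := by
  obtain ⟨e, he⟩ := h
  have := ndeg_lt_card G (e j)
  rw [Fintype.card_fin, he j] at this
  omega

lemma Monotone.le_of_le_comp_perm {ι α : Type*} [LinearOrder ι] [Fintype ι]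
    [LocallyFiniteOrderTop ι] [Preorder α] {a b : ι → α} (ha : Monotone a) (hb : Monotone b)
    (τ : Equiv.Perm ι) (h : ∀ i, a i ≤ b (τ i)) : a ≤ b := by
  intro i
  -- `τ` cannot map the `#(Ici i)` indices `≥ i` into the `#(Ici i) - 1` indices `> i`.
  obtain ⟨j, hij, hji⟩ : ∃ j, i ≤ j ∧ τ j ≤ i := by
    by_contra! hcon
    have hcard := Finset.card_le_card_of_injOn τ
      (fun j hj => Finset.mem_Ioi.2 (hcon j (Finset.mem_Ici.1 hj))) τ.injective.injOn
    rw [Finset.card_Ioi_eq_card_Ici_sub_one] at hcard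
    have : 0 < (Finset.Ici i).card := Finset.card_pos.2 Finset.nonempty_Ici
    omega
  calc a i ≤ a j := ha hij
    _ ≤ b (τ j) := h j
    _ ≤ b i := hb hji

lemma RealizesF.le_sorted_ndeg {n : ℕ} {G H : SimpleGraph (Fin n)} {π : Fin n → ℕ}
    (hG : RealizesF G π) (hπ : Monotone π) (hGH : G ≤ H) :
    π ≤ ndeg H ∘ Tuple.sort (ndeg H) := by
  obtain ⟨e, he⟩ := hG
  refine hπ.le_of_le_comp_perm (Tuple.monotone_sort _) (e.trans (Tuple.sort (ndeg H)).symm)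
    fun i => ?_
  simpa [← he i] using ndeg_mono hGH (e i)

lemma exists_le_edgeMaxNon {n : ℕ} (P : SimpleGraph (Fin n) → Prop) {G : SimpleGraph (Fin n)}
    (hG : ¬ P G) : ∃ H, G ≤ H ∧ EdgeMaxNon P H := by
  obtain ⟨H, ⟨hGH, hH⟩, hmax⟩ := Set.Finite.exists_maximal (s := {H | G ≤ H ∧ ¬ P H})
    (Set.toFinite _) ⟨G, le_rfl, hG⟩
  exact ⟨H, hGH, hH, fun H' hlt => by_contra fun hH' =>
    hlt.not_ge (hmax ⟨hGH.trans hlt.le, hH'⟩ hlt.le)⟩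

lemma IsSink.le_of_le_of_majorized {n : ℕ} {P : SimpleGraph (Fin n) → Prop} {π σ : Fin n → ℕ}
    (hsink : IsSink n P π) (hπσ : π ≤ σ)
    (hσ : ∃ π' : Fin n → ℕ, Monotone π' ∧ σ ≤ π' ∧ ∃ G, RealizesF G π' ∧ ¬ P G) : σ ≤ π := by
  obtain ⟨π', hπ', hσπ', G, hG, hGP⟩ := hσ
  obtain ⟨H, hGH, hH⟩ := exists_le_edgeMaxNon P hGP
  have hπ'H := hG.le_sorted_ndeg hπ' hGH
  have hH_eq : ndeg H ∘ Tuple.sort (ndeg H) = π :=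
    hsink.2.2 _ (Tuple.monotone_sort _) ⟨H, hH, Tuple.sort (ndeg H), fun _ => rfl⟩
      (hπσ.trans (hσπ'.trans hπ'H))
  exact hH_eq ▸ hσπ'.trans hπ'H

namespace ChvatalCond

variable {n : ℕ} (c : ChvatalCond n)

/-- `Π(c)`, the maximal nondecreasing sequence bounded by `n - 1` that violates `c`. -/
def maxViolator (j : Fin n) : ℕ :=
  (insert (n - 1) ((c.idx.filter (j ≤ ·)).image (c.bound · - 1))).min'
    (Finset.insert_nonempty _ _)

lemma le_maxViolator_iff {j : Fin n} {x : ℕ} :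
    x ≤ c.maxViolator j ↔ x ≤ n - 1 ∧ ∀ i ∈ c.idx, j ≤ i → x ≤ c.bound i - 1 := by
  simp only [maxViolator, Finset.le_min'_iff, Finset.forall_mem_insert, Finset.forall_mem_image,
    Finset.mem_filter, and_imp]

lemma maxViolator_le_sub_one (j : Fin n) : c.maxViolator j ≤ n - 1 :=
  ((c.le_maxViolator_iff).1 le_rfl).1

lemma maxViolator_lt_bound {i : Fin n} (hi : i ∈ c.idx) : c.maxViolator i < c.bound i := by
  have := ((c.le_maxViolator_iff).1 le_rfl).2 i hi le_rfl
  have := (c.bound_range i hi).1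
  omega

lemma monotone_maxViolator : Monotone c.maxViolator := fun _ _ hjk =>
  (c.le_maxViolator_iff).2 ⟨c.maxViolator_le_sub_one _, fun i hi hki =>
    ((c.le_maxViolator_iff).1 le_rfl).2 i hi (hjk.trans hki)⟩

lemma not_sat_iff_le_maxViolator {d : Fin n → ℕ} (hd : Monotone d) (hdn : ∀ j, d j ≤ n - 1) :
    ¬ c.Sat d ↔ d ≤ c.maxViolator := by
  refine ⟨fun hns j => (c.le_maxViolator_iff).2 ⟨hdn j, fun i hi hji => ?_⟩, fun hle => ?_⟩
  · have : d i < c.bound i := not_le.1 fun h => hns ⟨i, hi, h⟩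
    have := hd hji
    omega
  · rintro ⟨i, hi, hle'⟩
    exact (hle'.trans (hle i)).not_gt (c.maxViolator_lt_bound hi)

lemma not_sat_maxViolator : ¬ c.Sat c.maxViolator :=
  (c.not_sat_iff_le_maxViolator c.monotone_maxViolator c.maxViolator_le_sub_one).2 le_rfl

end ChvatalCond

theorem stmt5_general (n : ℕ) (P : SimpleGraph (Fin n) → Prop)
    (π : Fin n → ℕ) (hsink : IsSink n P π)
    (c : ChvatalCond n) (hwo : WeaklyOpt n P c)
    (hviol : ¬ c.Sat π) :
    -- `c ≅ C(π)`: on nondecreasing `n`-sequences, `c` is equivalent to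
    -- `d_1 ≥ π_1 + 1 ∨ … ∨ d_n ≥ π_n + 1`
    ∀ d : Fin n → ℕ, Monotone d → (∀ j, d j ≤ n - 1) →
      (c.Sat d ↔ ∃ j, π j + 1 ≤ d j) := by
  obtain ⟨G, -, hG⟩ := hsink.2.1
  have hπ_le : π ≤ c.maxViolator :=
    (c.not_sat_iff_le_maxViolator hsink.1 hG.le_sub_one).1 hviol
  have hle_π : c.maxViolator ≤ π :=
    hsink.le_of_le_of_majorized hπ_le <|
      hwo _ c.monotone_maxViolator c.maxViolator_le_sub_one c.not_sat_maxViolator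
  intro d hd hdn
  rw [← not_iff_not, c.not_sat_iff_le_maxViolator hd hdn, le_antisymm hle_π hπ_le]
  simp [Pi.le_def]

theorem stmt5 (n : ℕ) (P : SimpleGraph (Fin n) → Prop)
    (hP : ∀ G H, G ≤ H → P G → P H)
    (π : Fin n → ℕ) (hsink : IsSink n P π)
    (c : ChvatalCond n) (hwo : WeaklyOpt n P c)
    (hviol : ¬ c.Sat π) :
    -- `c ≅ C(π)`: on nondecreasing `n`-sequences, `c` is equivalent to
    -- `d_1 ≥ π_1 + 1 ∨ … ∨ d_n ≥ π_n + 1`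
    ∀ d : Fin n → ℕ, Monotone d → (∀ j, d j ≤ n - 1) →
      (c.Sat d ↔ ∃ j, π j + 1 ≤ d j) :=
  stmt5_general n P π hsink c hwo hviol
end

section
/- Let k ≥ 1 and let G be a connected graph on n vertices that is edge-maximal with respect to not being 1/k-tough. Then G has the form K_j + (K_{c_1} ∪ ... ∪ K_{c_{kj+1}}) for some integer j with 1 ≤ j < n/(k+1) and positive integers c_1,...,c_{kj+1} summing to n − j. -/
open SimpleGraph

/-- The graph `K_j + (K_{c_1} ∪ … ∪ K_{c_s})`: the join of a clique on `j` vertices with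
the disjoint union of cliques of orders `c_1, …, c_s`. -/
def JoinCliques (j : ℕ) {s : ℕ} (c : Fin s → ℕ) :
    SimpleGraph ((Fin j) ⊕ (Σ i : Fin s, Fin (c i))) :=
  SimpleGraph.fromRel (fun u v =>
    (∃ a, u = Sum.inl a) ∨ (∃ a, v = Sum.inl a) ∨
      (∃ a b, u = Sum.inr a ∧ v = Sum.inr b ∧ a.1 = b.1))

/-
Let `X` witness that `G` is not `1/k`-tough: `G - X` has more than `k|X|` components, and
`X ≠ ∅` because `G` is connected. Adding any missing edge makes `G` tough, so it must bring the
number of components of `G - X` down to at most `k|X|`. An edge at a vertex of `X`, or inside a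
component of `G - X`, leaves that number unchanged; hence `X` is joined to every vertex and the
components of `G - X` are cliques. An edge between two components lowers the number by at most
one, so there are exactly `k|X| + 1` components.
-/

def Equiv.sigmaOptionEquivSum {α : Type*} (β : Option α → Type*) :
    (Σ o, β o) ≃ β none ⊕ Σ a, β (some a) where
  toFun
    | ⟨none, b⟩ => .inl b
    | ⟨some a, b⟩ => .inr ⟨a, b⟩
  invFun := Sum.elim (fun b => ⟨none, b⟩) fun p => ⟨some p.1, p.2⟩
  left_inv := by rintro ⟨_ | a, b⟩ <;> rfl
  right_inv := by rintro (b | ⟨a, b⟩) <;> rfl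

namespace SimpleGraph

variable {V W ι : Type*}

theorem Reachable.of_sup_edge {H : SimpleGraph V} {u v x y : V}
    (h : (H ⊔ edge u v).Reachable x y) :
    H.Reachable x y ∨ (H.Reachable x u ∧ H.Reachable v y) ∨
      (H.Reachable x v ∧ H.Reachable u y) := by
  obtain ⟨w⟩ := h
  induction w with
  | nil => exact Or.inl (Reachable.refl _)
  | cons hadj _ ih =>
    rw [sup_adj, edge_adj] at hadj
    rcases hadj with hadj | ⟨⟨rfl, rfl⟩ | ⟨rfl, rfl⟩, -⟩
    · have := hadj.reachable
      grind [Reachable.trans]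
    · grind [Reachable.refl]
    · grind [Reachable.refl]

theorem card_connectedComponent_sup_edge_of_reachable {H : SimpleGraph V} {u v : V}
    (huv : H.Reachable u v) :
    Nat.card (H ⊔ edge u v).ConnectedComponent = Nat.card H.ConnectedComponent := by
  refine Nat.card_congr (Quot.congrRight fun x y => ⟨fun h => ?_, fun h => h.mono le_sup_left⟩)
  rcases h.of_sup_edge with h | ⟨hxu, hvy⟩ | ⟨hxv, huy⟩
  exacts [h, hxu.trans (huv.trans hvy), hxv.trans (huv.symm.trans huy)]

theorem card_connectedComponent_le_sup_edge_add_one [Finite V] (H : SimpleGraph V) (u v : V) :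
    Nat.card H.ConnectedComponent ≤ Nat.card (H ⊔ edge u v).ConnectedComponent + 1 := by
  classical
  -- only the component of `v` can be merged into another one
  let g : H.ConnectedComponent → Option (H ⊔ edge u v).ConnectedComponent := fun C =>
    if C = H.connectedComponentMk v then none else some (C.map (Hom.ofLE le_sup_left))
  have hg : g.Injective := by
    refine ConnectedComponent.ind₂ fun x y hxy => ?_
    by_cases hx : H.connectedComponentMk x = H.connectedComponentMk v <;>
      by_cases hy : H.connectedComponentMk y = H.connectedComponentMk v <;>
      simp only [g, hx, hy, if_true, if_false, reduceCtorEq, Option.some.injEq,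
        ConnectedComponent.map_mk, ConnectedComponent.eq] at hxy ⊢
    rw [ConnectedComponent.eq] at hx hy
    rcases hxy.of_sup_edge with h | ⟨-, hvy⟩ | ⟨hxv, -⟩
    exacts [h, absurd hvy.symm hy, absurd hxv hx]
  have := Fintype.ofFinite (H ⊔ edge u v).ConnectedComponent
  simpa using Nat.card_le_card_of_injective g hg

theorem induce_sup_edge_of_notMem (G : SimpleGraph V) {s : Set V} {a : V} (ha : a ∉ s) (b : V) :
    (G ⊔ edge a b).induce s = G.induce s := by
  ext x y
  simp only [comap_adj, Function.Embedding.coe_subtype, sup_adj, edge_adj, or_iff_left_iff_imp]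
  rintro ⟨⟨rfl, -⟩ | ⟨-, rfl⟩, -⟩
  exacts [absurd x.2 ha, absurd y.2 ha]

theorem induce_sup_edge (G : SimpleGraph V) {s : Set V} (a b : s) :
    (G ⊔ edge a b).induce s = G.induce s ⊔ edge a b := by
  ext x y
  simp only [comap_adj, Function.Embedding.coe_subtype, sup_adj, edge_adj, ne_eq, Subtype.ext_iff]

theorem delComp_sup_edge_of_mem {G : SimpleGraph V} {X : Set V} {a : V} (ha : a ∈ X) (b : V) :
    delComp (G ⊔ edge a b) X = delComp G X := by
  rw [delComp, delComp, induce_sup_edge_of_notMem G (Set.notMem_compl_iff.2 ha)]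

theorem delComp_sup_edge_of_reachable {G : SimpleGraph V} {X : Set V} {x y : ↥Xᶜ}
    (h : (G.induce Xᶜ).Reachable x y) : delComp (G ⊔ edge x y) X = delComp G X := by
  rw [delComp, delComp, induce_sup_edge, card_connectedComponent_sup_edge_of_reachable h]

theorem delComp_le_delComp_sup_edge_add_one [Finite V] (G : SimpleGraph V) {X : Set V}
    (x y : ↥Xᶜ) : delComp G X ≤ delComp (G ⊔ edge x y) X + 1 := by
  rw [delComp, delComp, induce_sup_edge]
  exact card_connectedComponent_le_sup_edge_add_one _ _ _

theorem Connected.delComp_empty {G : SimpleGraph V} (h : G.Connected) : delComp G ∅ = 1 := by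
  have : (G.induce Set.univ).Connected := (induceUnivIso G).connected_iff.2 h
  rw [delComp, Set.compl_empty, Nat.card_eq_one_iff_unique]
  exact ⟨this.preconnected.subsingleton_connectedComponent,
    this.nonempty.map (G.induce _).connectedComponentMk⟩

theorem isTough_of_nonpos [Fintype V] {t : ℝ} (ht : t ≤ 0) (G : SimpleGraph V) : IsTough t G :=
  fun _ _ => (mul_nonpos_of_nonpos_of_nonneg ht (Nat.cast_nonneg _)).trans (Nat.cast_nonneg _)

theorem isTough_one_div_iff [Fintype V] {k : ℕ} (hk : 0 < k) (G : SimpleGraph V) :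
    IsTough (1 / k) G ↔ ∀ X : Finset V, 1 < delComp G X → delComp G X ≤ k * X.card := by
  refine forall₂_congr fun X _ => ?_
  rw [one_div_mul_eq_div, div_le_iff₀ (by exact_mod_cast hk), mul_comm]
  exact_mod_cast Iff.rfl

def IsCriticalCut (G : SimpleGraph V) (X : Set V) (m : ℕ) : Prop :=
  m < delComp G X ∧ ∀ a b, a ≠ b → ¬G.Adj a b → delComp (G ⊔ edge a b) X ≤ m

namespace IsCriticalCut

variable {G : SimpleGraph V} {X : Set V} {m : ℕ}

theorem adj_of_mem (h : IsCriticalCut G X m) {a b : V} (ha : a ∈ X) (hab : a ≠ b) :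
    G.Adj a b := by
  by_contra hadj
  have := h.2 a b hab hadj
  rw [delComp_sup_edge_of_mem ha] at this
  exact this.not_gt h.1

theorem adj_of_reachable (h : IsCriticalCut G X m) {x y : ↥Xᶜ}
    (hxy : (G.induce Xᶜ).Reachable x y) (hne : x ≠ y) : G.Adj x y := by
  by_contra hadj
  have := h.2 x y (Subtype.coe_ne_coe.2 hne) hadj
  rw [delComp_sup_edge_of_reachable hxy] at this
  exact this.not_gt h.1

theorem delComp_eq [Finite V] (h : IsCriticalCut G X m) (h1 : 1 < delComp G X) :
    delComp G X = m + 1 := by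
  have : Nontrivial (G.induce Xᶜ).ConnectedComponent := Finite.one_lt_card_iff_nontrivial.1 h1
  obtain ⟨C, D, hCD⟩ := exists_pair_ne (G.induce Xᶜ).ConnectedComponent
  obtain ⟨x, rfl⟩ := C.exists_rep
  obtain ⟨y, rfl⟩ := D.exists_rep
  have hne : (x : V) ≠ y := fun hxy => hCD (congrArg _ (Subtype.ext hxy))
  have hadj : ¬G.Adj x y := fun hadj =>
    hCD (ConnectedComponent.connectedComponentMk_eq_of_adj (G := G.induce Xᶜ) hadj)
  have hle := h.2 x y hne hadj
  have hsucc := delComp_le_delComp_sup_edge_add_one G x y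
  have hlt := h.1
  omega

end IsCriticalCut

theorem isCriticalCut_of_forall_lt_isTough [Fintype V] {G : SimpleGraph V} {k : ℕ}
    {X : Finset V} (hk : 0 < k) (hX : X.Nonempty) (hlt : k * X.card < delComp G X)
    (hmax : ∀ H, G < H → IsTough (1 / (k : ℝ)) H) : IsCriticalCut G X (k * X.card) := by
  refine ⟨hlt, fun a b hab hadj => ?_⟩
  have htough := (isTough_one_div_iff hk _).1 (hmax _ (G.lt_sup_edge _ _ hab hadj)) X
  have hpos : 0 < k * X.card := Nat.mul_pos hk hX.card_pos
  by_cases h1 : 1 < delComp (G ⊔ edge a b) X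
  exacts [htough h1, by omega]

/-- `joinOfLabels f` is `K_j + (K_{c_1} ∪ ⋯ ∪ K_{c_s})`, where `j` and `c_i` are the sizes of
the fibres of `f` over `none` and over `some i`. -/
def joinOfLabels (f : V → Option ι) : SimpleGraph V where
  Adj u v := u ≠ v ∧ (f u = none ∨ f v = none ∨ f u = f v)
  symm.symm _ _ h := ⟨h.1.symm, by grind⟩
  loopless.irrefl _ h := h.1 rfl

def Iso.joinOfLabels {f : V → Option ι} {g : W → Option ι} (φ : V ≃ W)
    (hφ : ∀ v, g (φ v) = f v) : joinOfLabels f ≃g joinOfLabels g where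
  toEquiv := φ
  map_rel_iff' := by simp [SimpleGraph.joinOfLabels, hφ]

theorem joinCliques_eq_joinOfLabels (j : ℕ) {s : ℕ} (c : Fin s → ℕ) :
    JoinCliques j c = joinOfLabels (Sum.elim (fun _ => none) fun p => some p.1) := by
  ext (a | p) (b | q) <;> simp [JoinCliques, joinOfLabels, eq_comm, -Sigma.exists]

theorem nonempty_joinOfLabels_iso_joinCliques [Finite V] {s j : ℕ} (f : V → Option (Fin s))
    (hj : Nat.card {v // f v = none} = j) :
    Nonempty (joinOfLabels f ≃g JoinCliques j fun i => Nat.card {v // f v = some i}) := by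
  let φ : V ≃ Fin j ⊕ Σ i, Fin (Nat.card {v // f v = some i}) :=
    (Equiv.sigmaFiberEquiv f).symm.trans <| (Equiv.sigmaOptionEquivSum _).trans <|
      Equiv.sumCongr (Finite.equivFinOfCardEq hj) (Equiv.sigmaCongrRight fun _ => Finite.equivFin _)
  have hφ : ∀ w, f (φ.symm w) = Sum.elim (fun _ => none) (fun p => some p.1) w := by
    rintro (a | ⟨i, a⟩) <;> simp only [φ, Equiv.sigmaOptionEquivSum]
    · exact ((Finite.equivFinOfCardEq hj).symm a).prop
    · exact ((Finite.equivFin {v // f v = some i}).symm a).prop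
  rw [joinCliques_eq_joinOfLabels]
  exact ⟨Iso.joinOfLabels φ fun v => by rw [← hφ, Equiv.symm_apply_apply]⟩

theorem exists_iso_joinCliques [Fintype V] {G : SimpleGraph V} {X : Finset V}
    (huniv : ∀ a ∈ X, ∀ b, a ≠ b → G.Adj a b)
    (hclique : ∀ x y : ↥(↑X : Set V)ᶜ,
      (G.induce (↑X)ᶜ).Reachable x y → x ≠ y → G.Adj x y)
    {s : ℕ} (hs : delComp G X = s) :
    ∃ c : Fin s → ℕ, (∀ i, 1 ≤ c i) ∧ ∑ i, c i = Fintype.card V - X.card ∧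
      Nonempty (G ≃g JoinCliques X.card c) := by
  classical
  set H := G.induce (↑X : Set V)ᶜ
  let e : H.ConnectedComponent ≃ Fin s := Finite.equivFinOfCardEq hs
  let f : V → Option (Fin s) := fun v =>
    if hv : v ∈ X then none else some (e (H.connectedComponentMk ⟨v, hv⟩))
  have hG : G = joinOfLabels f := by
    ext u v
    by_cases hu : u ∈ X
    · simpa [joinOfLabels, f, hu] using ⟨Adj.ne, huniv u hu v⟩
    by_cases hv : v ∈ X
    · simpa [joinOfLabels, f, hv] using ⟨Adj.ne, fun huv => (huniv v hv u (Ne.symm huv)).symm⟩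
    simp only [joinOfLabels, f, hu, hv, dite_false, Option.some.injEq, e.apply_eq_iff_eq,
      ConnectedComponent.eq, reduceCtorEq, false_or]
    exact ⟨fun hadj => ⟨hadj.ne, Adj.reachable (G := H) hadj⟩,
      fun ⟨hne, hr⟩ => hclique _ _ hr (by simpa using hne)⟩
  have hnone : Nat.card {v // f v = none} = X.card := by
    simp [f]
  obtain ⟨ψ⟩ := nonempty_joinOfLabels_iso_joinCliques f hnone
  refine ⟨_, fun i => ?_, ?_, ⟨hG ▸ ψ⟩⟩
  · obtain ⟨x, hx⟩ := (e.symm i).exists_rep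
    have hxX : (x : V) ∉ X := x.2
    have : Nonempty {v // f v = some i} :=
      ⟨⟨x, by
        simp only [f, hxX, dite_false, Option.some.injEq, ← e.eq_symm_apply]
        exact hx⟩⟩
    exact Nat.card_pos
  · have := Nat.card_congr ψ.toEquiv
    simp only [Nat.card_eq_fintype_card, Fintype.card_sum, Fintype.card_fin, Fintype.card_sigma]
      at this ⊢
    omega

end SimpleGraph

theorem stmt7_general (k : ℕ) (n : ℕ) (G : SimpleGraph (Fin n))
    (hconn : G.Connected)
    (hnt : ¬ IsTough (1 / (k : ℝ)) G)
    (hmax : ∀ H, G < H → IsTough (1 / (k : ℝ)) H) :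
    ∃ j : ℕ, 1 ≤ j ∧ (j : ℝ) < (n : ℝ) / ((k : ℝ) + 1) ∧
      ∃ c : Fin (k * j + 1) → ℕ, (∀ i, 1 ≤ c i) ∧ (∑ i, c i) = n - j ∧
        Nonempty (G ≃g JoinCliques j c) := by
  have hk : 0 < k := Nat.pos_of_ne_zero fun hk => hnt (isTough_of_nonpos (by simp [hk]) G)
  rw [isTough_one_div_iff hk] at hnt
  push Not at hnt
  obtain ⟨X, hX1, hXlt⟩ := hnt
  have hX : X.Nonempty := Finset.nonempty_iff_ne_empty.2 fun h => by
    simp [h, hconn.delComp_empty] at hX1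
  have hcut := isCriticalCut_of_forall_lt_isTough hk hX hXlt hmax
  obtain ⟨c, hc, hsum, hiso⟩ := exists_iso_joinCliques (fun _ ha _ => hcut.adj_of_mem ha)
    (fun _ _ => hcut.adj_of_reachable) (hcut.delComp_eq hX1)
  rw [Fintype.card_fin] at hsum
  refine ⟨X.card, hX.card_pos, ?_, c, hc, hsum, hiso⟩
  have hc_sum : k * X.card + 1 ≤ ∑ i, c i := by
    simpa using Finset.card_nsmul_le_sum Finset.univ c 1 fun i _ => hc i
  have hXn : X.card ≤ n := by simpa using X.card_le_univ
  rw [lt_div_iff₀ (by positivity)]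
  have hmul : X.card * (k + 1) = k * X.card + X.card := by ring
  exact_mod_cast (by omega : X.card * (k + 1) < n)

theorem stmt7 (k : ℕ) (hk : 1 ≤ k) (n : ℕ) (G : SimpleGraph (Fin n))
    (hconn : G.Connected)
    (hnt : ¬ IsTough (1 / (k : ℝ)) G)
    (hmax : ∀ H, G < H → IsTough (1 / (k : ℝ)) H) :
    ∃ j : ℕ, 1 ≤ j ∧ (j : ℝ) < (n : ℝ) / ((k : ℝ) + 1) ∧
      ∃ c : Fin (k * j + 1) → ℕ, (∀ i, 1 ≤ c i) ∧ (∑ i, c i) = n - j ∧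
        Nonempty (G ≃g JoinCliques j c) :=
  stmt7_general k n G hconn hnt hmax
end

section
/- Let j, k, n be positive integers and let (c_1 ≤ ... ≤ c_{kj+1}) and (c'_1 ≤ ... ≤ c'_{kj+1}) be two sequences of positive integers each summing to n − j. Let π = (c_1+j−1)^{c_1} ... (c_{kj+1}+j−1)^{c_{kj+1}} (n−1)^j and π' defined analogously from the c'_i. If π majorizes π' componentwise (both written in nondecreasing order), then the two sequences (c_i) and (c'_i) are equal. -/
/-!
Weight an entry `x ≥ j` of a degree sequence by `1 / (x - j + 1)`. Each block
`(c_i + j - 1)^{c_i}` then has total weight exactly `1`, so the total weight of `π` is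
`kj + 1 + j / (n - j)` whatever the `c_i` are. The weight is strictly decreasing, so `π ≥ π'`
together with equal total weights forces `π = π'`. The multiplicity of `w + j - 1` in `π` is
`w` times the number of `i` with `c_i = w`, so `π` determines the multiset of the `c_i`, and
monotonicity then determines the sequence.
-/

/-- The degree multiset `(c_1+j-1)^{c_1} … (c_s+j-1)^{c_s} (n-1)^j` of the graph
`K_j + (K_{c_1} ∪ … ∪ K_{c_s})` on `n` vertices. -/
def degSeqMS (n j : ℕ) {s : ℕ} (c : Fin s → ℕ) : Multiset ℕ :=
  (∑ i : Fin s, Multiset.replicate (c i) (c i + j - 1)) + Multiset.replicate j (n - 1)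

/-- The `i`-th entry (0-based) of the multiset `M` sorted nondecreasingly. -/
def sortedNth (M : Multiset ℕ) (i : ℕ) : ℕ :=
  (Multiset.sort M (· ≤ ·)).getD i 0

theorem sortedNth_mem {M : Multiset ℕ} {i : ℕ} (hi : i < M.card) : sortedNth M i ∈ M := by
  rw [sortedNth, List.getD_eq_getElem _ _ (by rwa [Multiset.length_sort]),
    ← Multiset.mem_sort (· ≤ ·)]
  exact List.getElem_mem _

theorem sum_map_eq_sum_sortedNth {β : Type*} [AddCommMonoid β] (M : Multiset ℕ) (f : ℕ → β) :
    (M.map f).sum = ∑ i : Fin M.card, f (sortedNth M i) := by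
  conv_lhs => rw [← Multiset.sort_eq M (· ≤ ·)]
  rw [Multiset.map_coe, Multiset.sum_coe, ← List.ofFn_getElem_eq_map, List.sum_ofFn]
  exact Fintype.sum_equiv (finCongr (Multiset.length_sort _)) _ _ fun i =>
    by simp [sortedNth, List.getElem?_eq_getElem i.isLt]

theorem eq_of_sortedNth_eq {M M' : Multiset ℕ} (hcard : M.card = M'.card)
    (h : ∀ i < M.card, sortedNth M i = sortedNth M' i) : M = M' := by
  rw [← Multiset.sort_eq M (· ≤ ·), ← Multiset.sort_eq M' (· ≤ ·)]
  congr 1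
  refine List.ext_getElem (by simpa using hcard) fun i hi hi' => ?_
  have := h i (by simpa using hi)
  rwa [sortedNth, sortedNth, List.getD_eq_getElem _ _ hi, List.getD_eq_getElem _ _ hi'] at this

theorem eq_of_sortedNth_le_of_sum_map_eq {β : Type*} [AddCommMonoid β] [PartialOrder β]
    [IsOrderedCancelAddMonoid β] {M M' : Multiset ℕ} {s : Set ℕ} {f : ℕ → β}
    (hf : StrictAntiOn f s) (hM : ∀ x ∈ M, x ∈ s) (hM' : ∀ x ∈ M', x ∈ s)
    (hcard : M.card = M'.card) (hle : ∀ i, sortedNth M i ≤ sortedNth M' i)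
    (hsum : (M.map f).sum = (M'.map f).sum) : M = M' := by
  have hmem {i : ℕ} (hi : i < M.card) : sortedNth M i ∈ s ∧ sortedNth M' i ∈ s :=
    ⟨hM _ (sortedNth_mem hi), hM' _ (sortedNth_mem (hcard ▸ hi))⟩
  have hterm (i : Fin M.card) : f (sortedNth M' i) ≤ f (sortedNth M i) :=
    hf.antitoneOn (hmem i.isLt).1 (hmem i.isLt).2 (hle i)
  have hsum' : ∑ i : Fin M.card, f (sortedNth M' i) = ∑ i : Fin M.card, f (sortedNth M i) := by
    rw [← sum_map_eq_sum_sortedNth, hcard, ← sum_map_eq_sum_sortedNth, hsum]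
  refine eq_of_sortedNth_eq hcard fun i hi => hf.injOn (hmem hi).1 (hmem hi).2 ?_
  exact ((Finset.sum_eq_sum_iff_of_le fun i _ => hterm i).mp hsum' ⟨i, hi⟩ (Finset.mem_univ _)).symm

theorem Monotone.eq_of_map_univ_eq {α : Type*} [PartialOrder α] {s : ℕ} {f g : Fin s → α}
    (hf : Monotone f) (hg : Monotone g)
    (h : Finset.univ.val.map f = Finset.univ.val.map g) : f = g := by
  have hperm : (List.ofFn f).Perm (List.ofFn g) := by
    rw [← Multiset.coe_eq_coe, List.ofFn_eq_map, List.ofFn_eq_map, ← Multiset.map_coe,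
      ← Multiset.map_coe]
    exact h
  exact List.ofFn_injective <| hperm.eq_of_sortedLE (List.sortedLE_ofFn_iff.mpr hf)
    (List.sortedLE_ofFn_iff.mpr hg)

def shiftedInv (j x : ℕ) : ℚ := ((x - j + 1 : ℕ) : ℚ)⁻¹

theorem strictAntiOn_shiftedInv (j : ℕ) : StrictAntiOn (shiftedInv j) (Set.Ici j) := by
  intro x hx y hy hxy
  simp only [Set.mem_Ici] at hx hy
  unfold shiftedInv
  gcongr

section degSeqMS

variable {n j s : ℕ} {c : Fin s → ℕ}

theorem card_degSeqMS : (degSeqMS n j c).card = ∑ i, c i + j := by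
  simp [degSeqMS, Multiset.card_sum]

theorem le_of_mem_degSeqMS (hc : ∀ i, 1 ≤ c i) (hn : j < n) {x : ℕ} (hx : x ∈ degSeqMS n j c) :
    j ≤ x := by
  simp only [degSeqMS, Multiset.mem_add, Multiset.mem_sum, Finset.mem_univ, true_and] at hx
  rcases hx with ⟨i, hi⟩ | hx
  · have := hc i
    rw [Multiset.eq_of_mem_replicate hi]
    omega
  · rw [Multiset.eq_of_mem_replicate hx]
    omega

theorem sum_map_shiftedInv_degSeqMS (hc : ∀ i, 1 ≤ c i) :
    ((degSeqMS n j c).map (shiftedInv j)).sum = s + j * shiftedInv j (n - 1) := by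
  have hblock (i : Fin s) : (c i : ℚ) * shiftedInv j (c i + j - 1) = 1 := by
    have := hc i
    rw [shiftedInv, show c i + j - 1 - j + 1 = c i by omega]
    exact mul_inv_cancel₀ (by positivity)
  rw [degSeqMS, Multiset.map_add, Multiset.sum_add, ← Multiset.coe_mapAddMonoidHom, map_sum,
    ← Multiset.coe_sumAddMonoidHom, map_sum]
  simp [hblock]

theorem count_sum_replicate (hc : ∀ i, 1 ≤ c i) {w : ℕ} (hw : 1 ≤ w) :
    (∑ i, Multiset.replicate (c i) (c i + j - 1)).count (w + j - 1) =
      w * (Finset.univ.val.map c).count w := by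
  classical
  rw [Multiset.count_sum', Multiset.count_map, ← Finset.filter_val, ← Finset.card_def,
    Finset.card_filter, Finset.mul_sum]
  refine Finset.sum_congr rfl fun i _ => ?_
  have := hc i
  by_cases h : c i = w
  · simp only [h, Multiset.count_replicate_self, ↓reduceIte, mul_one]
  · rw [Multiset.count_replicate, if_neg (by omega), if_neg (Ne.symm h), mul_zero]

theorem map_univ_eq_of_degSeqMS_eq {c' : Fin s → ℕ} (hc : ∀ i, 1 ≤ c i) (hc' : ∀ i, 1 ≤ c' i)
    (h : degSeqMS n j c = degSeqMS n j c') : Finset.univ.val.map c = Finset.univ.val.map c' := by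
  have hblocks := add_right_cancel h
  ext w
  rcases Nat.eq_zero_or_pos w with rfl | hw
  · have hzero {d : Fin s → ℕ} (hd : ∀ i, 1 ≤ d i) : (Finset.univ.val.map d).count 0 = 0 :=
      Multiset.count_eq_zero.mpr (by simpa using fun i => Nat.one_le_iff_ne_zero.mp (hd i))
    rw [hzero hc, hzero hc']
  · exact Nat.eq_of_mul_eq_mul_left hw <| by
      rw [← count_sum_replicate hc hw, ← count_sum_replicate hc' hw, hblocks]

end degSeqMS

theorem stmt9_general (j k n : ℕ)
    (c c' : Fin (k * j + 1) → ℕ)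
    (hc : ∀ i, 1 ≤ c i) (hc' : ∀ i, 1 ≤ c' i)
    (hmc : Monotone c) (hmc' : Monotone c')
    (hsum : (∑ i, c i) = n - j) (hsum' : (∑ i, c' i) = n - j)
    -- π majorizes π' componentwise (both sorted nondecreasingly)
    (hmaj : ∀ i : ℕ, sortedNth (degSeqMS n j c') i ≤ sortedNth (degSeqMS n j c) i) :
    c = c' := by
  have hjn : j < n := by
    have := (hc 0).trans (Finset.single_le_sum (fun i _ => Nat.zero_le (c i)) (Finset.mem_univ 0))
    omega
  have hdeg : degSeqMS n j c' = degSeqMS n j c :=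
    eq_of_sortedNth_le_of_sum_map_eq (strictAntiOn_shiftedInv j)
      (fun _ => le_of_mem_degSeqMS hc' hjn) (fun _ => le_of_mem_degSeqMS hc hjn)
      (by rw [card_degSeqMS, card_degSeqMS, hsum, hsum']) hmaj
      (by rw [sum_map_shiftedInv_degSeqMS hc, sum_map_shiftedInv_degSeqMS hc'])
  exact hmc.eq_of_map_univ_eq hmc' (map_univ_eq_of_degSeqMS_eq hc hc' hdeg.symm)

theorem stmt9 (j k n : ℕ) (hj : 1 ≤ j) (hk : 1 ≤ k) (hn : 1 ≤ n)
    (c c' : Fin (k * j + 1) → ℕ)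
    (hc : ∀ i, 1 ≤ c i) (hc' : ∀ i, 1 ≤ c' i)
    (hmc : Monotone c) (hmc' : Monotone c')
    (hsum : (∑ i, c i) = n - j) (hsum' : (∑ i, c' i) = n - j)
    -- π majorizes π' componentwise (both sorted nondecreasingly)
    (hmaj : ∀ i : ℕ, sortedNth (degSeqMS n j c') i ≤ sortedNth (degSeqMS n j c) i) :
    c = c' :=
  stmt9_general j k n c c' hc hc' hmc hmc' hsum hsum' hmaj
end

section
/- Let k ≥ 1 be an integer, n ≥ k+2, and π = (d_1 ≤ ... ≤ d_n) a graphical sequence. Suppose: (i) for every integer i with k ≤ i < (n+k−1)/2, d_i ≥ i−k+2 or d_{n−i+k−1} ≥ n−i; and (ii) for every integer i with 1 ≤ i ≤ n/2, d_i ≥ i or d_n ≥ n−i. Then every realization of π is 1/k-tough. -/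
/-!
Suppose `G - X` has more than `k * s` components, `s = |X|`. A vertex `v ∉ X` has fewer than
`s + |C|` neighbours, where `C` is its component. Take the `p` smallest components, `p = s + k - 1`
(or `p = 1` if `s = 0`): say they have `i` vertices in total, the largest has `a` vertices, and the
remaining components have `T ≥ a` vertices. Then `d_m < a + s` for `m ≤ i`, `d_m < T + s` for
`m ≤ n - s`, and `i ≥ p - 1 + a`, `i + T + s = n`. For `s = 0` this contradicts (ii) at `a`; for
`s ≥ 1` it contradicts (i) at `i`, `i - 1` or `n - i + k - 1`, according as `2i` is smaller than,
equal to or larger than `n + k - 1`.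
-/

open SimpleGraph

open Finset

theorem exists_finset_card_eq_forall_le {α : Type*} [Fintype α] [DecidableEq α]
    (f : α → ℕ) {p : ℕ} (hp : p ≤ Fintype.card α) :
    ∃ P : Finset α, #P = p ∧ ∀ x ∈ P, ∀ y ∉ P, f x ≤ f y := by
  induction p with
  | zero => exact ⟨∅, rfl, by simp⟩
  | succ q ih =>
    obtain ⟨P, hPcard, hPle⟩ := ih (by omega)
    obtain ⟨y₀, hy₀, hy₀min⟩ := Pᶜ.exists_min_image f
      (by rw [← card_pos, card_compl, hPcard]; omega)
    rw [mem_compl] at hy₀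
    refine ⟨insert y₀ P, by rw [card_insert_of_notMem hy₀, hPcard], fun x hx y hy => ?_⟩
    rw [mem_insert, not_or] at hy
    rcases mem_insert.mp hx with rfl | hxP
    · exact hy₀min y (mem_compl.mpr hy.2)
    · exact hPle x hxP y hy.2

theorem exists_finset_split_of_lt_card {ι : Type*} [Fintype ι] [DecidableEq ι] (sz : ι → ℕ)
    (hsz : ∀ j, 1 ≤ sz j) {p : ℕ} (hp : 1 ≤ p) (hpc : p < Fintype.card ι) :
    ∃ P : Finset ι, ∃ a, 1 ≤ a ∧ (∀ j ∈ P, sz j ≤ a) ∧ p + a ≤ ∑ j ∈ P, sz j + 1 ∧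
      a ≤ ∑ j ∈ Pᶜ, sz j ∧ ∀ j, sz j ≤ ∑ j ∈ Pᶜ, sz j := by
  obtain ⟨P, hPcard, hPle⟩ := exists_finset_card_eq_forall_le sz hpc.le
  obtain ⟨j₀, hj₀, hj₀max⟩ := P.exists_max_image sz (by rw [← card_pos]; omega)
  obtain ⟨y, hy⟩ : Pᶜ.Nonempty := by rw [← card_pos, card_compl]; omega
  have hsingle : ∀ j ∉ P, sz j ≤ ∑ j ∈ Pᶜ, sz j := fun j hj =>
    single_le_sum (fun _ _ => Nat.zero_le _) (mem_compl.mpr hj)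
  have haT : sz j₀ ≤ ∑ j ∈ Pᶜ, sz j := (hPle j₀ hj₀ y (mem_compl.mp hy)).trans
    (hsingle y (mem_compl.mp hy))
  refine ⟨P, sz j₀, hsz j₀, hj₀max, ?_, haT, fun j => ?_⟩
  · have hrest : #(P.erase j₀) ≤ ∑ j ∈ P.erase j₀, sz j := by
      simpa using card_nsmul_le_sum (P.erase j₀) sz 1 (fun j _ => hsz j)
    rw [card_erase_of_mem hj₀, hPcard] at hrest
    have := sum_erase_add P sz hj₀
    omega
  · by_cases hj : j ∈ P
    · exact (hj₀max j hj).trans haT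
    · exact hsingle j hj

/-- The components of `G - X`, `|X| = s`, for a realization `G` of `d` on `n` vertices, split into
the `p` smallest ones (`i` vertices in total, at most `a` in each) and the rest (`T` vertices in
total, at most `T` in each), together with the degree bounds this split forces. -/
structure DegreeSplit (n s p : ℕ) (d : ℕ → ℕ) (i a T : ℕ) : Prop where
  sum_eq : i + T + s = n
  one_le_max : 1 ≤ a
  max_le_rest : a ≤ T
  add_max_le : p + a ≤ i + 1
  lt_small : ∀ m, 1 ≤ m → m ≤ i → d m < a + s
  lt_rest : ∀ m, 1 ≤ m → m + s ≤ n → d m < T + s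

namespace DegreeSplit

variable {n s p : ℕ} {d : ℕ → ℕ} {i a T : ℕ}

theorem false_of_condition_ii (h : DegreeSplit n 0 1 d i a T)
    (hii : ∀ i : ℕ, 1 ≤ i → 2 * i ≤ n → i ≤ d i ∨ n - i ≤ d n) : False := by
  obtain ⟨hsum, ha, haT, hpa, small, rest⟩ := h
  rcases hii a ha (by omega) with hsmall | hlarge
  · have := small a ha (by omega)
    omega
  · have := rest n (by omega) (by omega)
    omega

theorem false_of_condition_i {k : ℕ} (hk : 1 ≤ k) (hs : 1 ≤ s)
    (h : DegreeSplit n s (s + k - 1) d i a T)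
    (hi : ∀ i : ℕ, k ≤ i → 2 * i < n + k - 1 →
      i - k + 2 ≤ d i ∨ n - i ≤ d (n - i + k - 1)) : False := by
  obtain ⟨hsum, ha, haT, hpa, small, rest⟩ := h
  rcases lt_trichotomy (2 * i) (n + k - 1) with hlt | heq | hgt
  · rcases hi i (by omega) hlt with h₁ | h₁
    · have := small i (by omega) le_rfl; omega
    · have := rest (n - i + k - 1) (by omega) (by omega); omega
  · rcases hi (i - 1) (by omega) (by omega) with h₁ | h₁
    · have := small (i - 1) (by omega) (by omega); omega
    · rw [show n - (i - 1) + k - 1 = i + 1 by omega] at h₁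
      have := rest (i + 1) (by omega) (by omega); omega
  · rcases hi (n - i + k - 1) (by omega) (by omega) with h₁ | h₁
    · have := rest (n - i + k - 1) (by omega) (by omega); omega
    · rw [show n - (n - i + k - 1) + k - 1 = i by omega] at h₁
      have := small i (by omega) le_rfl; omega

end DegreeSplit

theorem ndeg_lt_card_supp_add_card {V : Type*} [Finite V] (G : SimpleGraph V) (X : Finset V)
    (v : ↥(↑X : Set V)ᶜ) :
    ndeg G v < Nat.card ((G.induce (↑X : Set V)ᶜ).connectedComponentMk v).supp + #X := by
  set C := (G.induce (↑X : Set V)ᶜ).connectedComponentMk v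
  have hsub : {u | G.Adj v u} ⊆ ↑X ∪ Subtype.val '' (C.supp \ {v}) := by
    intro u hu
    by_cases hx : u ∈ X
    · exact Or.inl hx
    · refine Or.inr ⟨⟨u, hx⟩, ⟨?_, ?_⟩, rfl⟩
      · exact ConnectedComponent.sound (Adj.reachable (G := G.induce _) hu.symm)
      · rintro rfl
        exact G.irrefl hu
  calc ndeg G v = {u | G.Adj v u}.ncard := Nat.card_coe_set_eq _
    _ ≤ (↑X ∪ Subtype.val '' (C.supp \ {v})).ncard := Set.ncard_le_ncard hsub
    _ ≤ #X + (C.supp \ {v}).ncard := by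
      grw [Set.ncard_union_le, Set.ncard_coe_finset,
        Set.ncard_image_of_injective _ Subtype.val_injective]
    _ < #X + C.supp.ncard := by
      gcongr
      exact Set.ncard_sdiff_singleton_lt_of_mem ConnectedComponent.connectedComponentMk_mem
    _ = Nat.card C.supp + #X := by rw [Nat.card_coe_set_eq, add_comm]

theorem SimpleGraph.card_filter_connectedComponentMk_mem {W : Type*} [Fintype W]
    {H : SimpleGraph W} [DecidableEq H.ConnectedComponent] (P : Finset H.ConnectedComponent) :
    #{w | H.connectedComponentMk w ∈ P} = ∑ C ∈ P, Nat.card C.supp := by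
  classical
  rw [card_eq_sum_card_fiberwise (f := H.connectedComponentMk) (t := P)
    (fun w hw => by simpa using hw)]
  refine sum_congr rfl fun C hC => ?_
  rw [Nat.card_eq_card_toFinset]
  congr 1
  ext w
  simp only [mem_filter, mem_univ, true_and, Set.mem_toFinset, ConnectedComponent.mem_supp_iff,
    and_iff_right_iff_imp]
  rintro rfl
  exact hC

section

variable {V : Type*} {n : ℕ} {G : SimpleGraph V} {d : ℕ → ℕ}

theorem Realizes.lt_of_le_card (hG : Realizes n G d)
    (hmono : ∀ i j : ℕ, 1 ≤ i → i ≤ j → j ≤ n → d i ≤ d j)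
    {S : Finset V} {D m : ℕ} (hS : ∀ v ∈ S, ndeg G v < D) (hm : 1 ≤ m) (hmS : m ≤ #S) :
    d m < D := by
  obtain ⟨e, he⟩ := hG
  obtain ⟨j, hj, hmj⟩ : ∃ j ∈ S.map e.symm.toEmbedding, m ≤ j.1 + 1 := by
    by_contra! h
    have := card_le_card_of_injOn Fin.val (t := range (m - 1))
      (fun j hj => by have := h j hj; simp only [coe_range, Set.mem_Iio]; omega)
      Fin.val_injective.injOn
    rw [card_map, card_range] at this
    omega
  obtain ⟨v, hv, rfl⟩ := mem_map.mp hj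
  calc d m ≤ d (e.symm v + 1) := hmono _ _ hm hmj (by omega)
    _ = ndeg G v := by rw [← he, Equiv.apply_symm_apply]
    _ < D := hS v hv

theorem Realizes.lt_of_le_sum_card_supp [Fintype V] (hG : Realizes n G d)
    (hmono : ∀ i j : ℕ, 1 ≤ i → i ≤ j → j ≤ n → d i ≤ d j)
    (X : Finset V) (P : Finset (G.induce (↑X : Set V)ᶜ).ConnectedComponent) {M m : ℕ}
    (hP : ∀ C ∈ P, Nat.card C.supp ≤ M) (hm : 1 ≤ m) (hmP : m ≤ ∑ C ∈ P, Nat.card C.supp) :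
    d m < M + #X := by
  classical
  refine hG.lt_of_le_card hmono
    (S := ({w | (G.induce _).connectedComponentMk w ∈ P} : Finset _).map (.subtype _)) ?_ hm ?_
  · intro v hv
    obtain ⟨w, hw, rfl⟩ := mem_map.mp hv
    have := ndeg_lt_card_supp_add_card G X w
    have := hP _ (mem_filter.mp hw).2
    simp only [Function.Embedding.subtype_apply]
    omega
  · rwa [card_map, card_filter_connectedComponentMk_mem]

theorem Realizes.exists_degreeSplit [Fintype V] (hG : Realizes n G d)
    (hmono : ∀ i j : ℕ, 1 ≤ i → i ≤ j → j ≤ n → d i ≤ d j)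
    (X : Finset V) {p : ℕ} (hp : 1 ≤ p) (hpX : p < delComp G X) :
    ∃ i a T, DegreeSplit n #X p d i a T := by
  classical
  set H := G.induce (↑X : Set V)ᶜ
  have hn : Fintype.card V = n := by
    obtain ⟨e, -⟩ := hG
    rw [← Fintype.card_congr e, Fintype.card_fin]
  have hpos (C : H.ConnectedComponent) : 1 ≤ Nat.card C.supp :=
    have : Nonempty C.supp := C.nonempty_supp.to_subtype
    Nat.card_pos
  have htotal : ∑ C : H.ConnectedComponent, Nat.card C.supp = n - #X := by
    rw [← card_filter_connectedComponentMk_mem, filter_true_of_mem (fun _ _ => mem_univ _),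
      card_univ, ← Nat.card_eq_fintype_card, Nat.card_coe_set_eq, ← coe_compl,
      Set.ncard_coe_finset, card_compl, hn]
  obtain ⟨P, a, ha, hPa, hpa, haT, hT⟩ :=
    exists_finset_split_of_lt_card (fun C : H.ConnectedComponent => Nat.card C.supp) hpos hp
      (by rwa [← Nat.card_eq_fintype_card])
  have hsplit := sum_add_sum_compl P (fun C : H.ConnectedComponent => Nat.card C.supp)
  have hXn : #X ≤ n := hn ▸ card_le_univ X
  refine ⟨_, a, _, ⟨by omega, ha, haT, hpa,
    fun m hm hmi => hG.lt_of_le_sum_card_supp hmono X P hPa hm hmi,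
    fun m hm hmn => hG.lt_of_le_sum_card_supp hmono X univ (fun C _ => hT C) hm
      ((by omega : m ≤ n - #X).trans_eq htotal.symm)⟩⟩

end

theorem stmt14_general (k : ℕ) (hk : 1 ≤ k) (n : ℕ)
    (d : ℕ → ℕ)
    (hmono : ∀ i j : ℕ, 1 ≤ i → i ≤ j → j ≤ n → d i ≤ d j)
    (hi : ∀ i : ℕ, k ≤ i → 2 * i < n + k - 1 →
      i - k + 2 ≤ d i ∨ n - i ≤ d (n - i + k - 1))
    (hii : ∀ i : ℕ, 1 ≤ i → 2 * i ≤ n → i ≤ d i ∨ n - i ≤ d n) :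
    ∀ G : SimpleGraph (Fin n), Realizes n G d → IsTough (1 / (k : ℝ)) G := by
  intro G hG X hX
  rw [one_div_mul_eq_div, div_le_iff₀ (by exact_mod_cast hk)]
  suffices delComp G X ≤ #X * k by exact_mod_cast this
  by_contra! hlt
  rcases Nat.eq_zero_or_pos #X with hX0 | hXpos
  · obtain ⟨i, a, T, h⟩ := hG.exists_degreeSplit hmono X le_rfl hX
    exact (hX0 ▸ h).false_of_condition_ii hii
  · have hkX : k - 1 ≤ #X * k - #X :=
      Nat.mul_sub_one #X k ▸ Nat.le_mul_of_pos_left (k - 1) hXpos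
    have hXk : #X ≤ #X * k := Nat.le_mul_of_pos_right #X hk
    obtain ⟨i, a, T, h⟩ := hG.exists_degreeSplit hmono X (p := #X + k - 1) (by omega) (by omega)
    exact h.false_of_condition_i hk hXpos hi

theorem stmt14 (k : ℕ) (hk : 1 ≤ k) (n : ℕ) (hn : k + 2 ≤ n)
    (d : ℕ → ℕ)
    (hmono : ∀ i j : ℕ, 1 ≤ i → i ≤ j → j ≤ n → d i ≤ d j)
    (hgraph : ∃ G : SimpleGraph (Fin n), Realizes n G d)
    (hi : ∀ i : ℕ, k ≤ i → 2 * i < n + k - 1 →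
      i - k + 2 ≤ d i ∨ n - i ≤ d (n - i + k - 1))
    (hii : ∀ i : ℕ, 1 ≤ i → 2 * i ≤ n → i ≤ d i ∨ n - i ≤ d n) :
    ∀ G : SimpleGraph (Fin n), Realizes n G d → IsTough (1 / (k : ℝ)) G :=
  stmt14_general k hk n d hmono hi hii
end

section
/- Let t ≤ 1 be a positive real, n ≥ ⌊1/t⌋ + 2, and π = (d_1 ≤ ... ≤ d_n) a graphical sequence. Suppose: (i) for every integer i with ⌊1/t⌋ ≤ i < (n + ⌊1/t⌋ − 1)/2, d_i ≥ i − ⌊1/t⌋ + 2 or d_{n−i+⌊1/t⌋−1} ≥ n−i; and (ii) for every integer i with 1 ≤ i ≤ n/2, d_i ≥ i or d_n ≥ n−i. Then every realization of π is t-tough. -/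
/-!
With `k = ⌊1/t⌋` it suffices to show `ω(G - X) ≤ k |X|` for every cut `X`. Otherwise let the
two largest components of `G - X` have `c₁ ≥ c₂` vertices. A vertex outside `X` has all its
neighbours in `X` or in its own component, so the `n - |X| - c₁` vertices outside `X` and the
largest component have degree `< |X| + c₂`, and every vertex outside `X` has degree `< |X| + c₁`.
As `G - X` has at least `k + |X|` components, these counts contradict (i) at
`i = |X| + c₂ + k - 2`; when `X = ∅` they contradict (ii) at `i = c₂`.
-/

open SimpleGraph

lemma SimpleGraph.ConnectedComponent.sum_card_supp {W : Type*} [Fintype W] (H : SimpleGraph W)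
    [Fintype H.ConnectedComponent] :
    ∑ c : H.ConnectedComponent, Nat.card c.supp = Nat.card W := by
  rw [← Nat.card_sigma]
  exact Nat.card_congr (Equiv.sigmaFiberEquiv H.connectedComponentMk)

variable {V : Type*}

lemma ndeg_add_one_le [Finite V] (G : SimpleGraph V) (X : Set V) {v : V} (hv : v ∈ Xᶜ) :
    ndeg G v + 1 ≤ X.ncard + Nat.card ((G.induce Xᶜ).connectedComponentMk ⟨v, hv⟩).supp := by
  set K := (G.induce Xᶜ).connectedComponentMk ⟨v, hv⟩
  have hsub : {u | G.Adj v u} ⊆ (X ∪ Subtype.val '' K.supp) \ {v} := by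
    intro u (hu : G.Adj v u)
    refine ⟨?_, hu.ne'⟩
    by_cases hx : u ∈ X
    · exact Or.inl hx
    · have hadj : (G.induce Xᶜ).Adj ⟨v, hv⟩ ⟨u, hx⟩ := hu
      exact Or.inr ⟨⟨u, hx⟩, ConnectedComponent.sound hadj.reachable.symm, rfl⟩
  have hvA : v ∈ X ∪ Subtype.val '' K.supp := Or.inr ⟨⟨v, hv⟩, rfl, rfl⟩
  calc ndeg G v + 1 ≤ ((X ∪ Subtype.val '' K.supp) \ {v}).ncard + 1 := by
        rw [ndeg, Nat.card_coe_set_eq]; gcongr; exact Set.toFinite _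
    _ = (X ∪ Subtype.val '' K.supp).ncard := Set.ncard_sdiff_singleton_add_one hvA
    _ ≤ X.ncard + (Subtype.val '' K.supp).ncard := Set.ncard_union_le _ _
    _ = X.ncard + Nat.card K.supp := by
        rw [Set.ncard_image_of_injective _ Subtype.val_injective, Nat.card_coe_set_eq]

lemma Realizes.le_of_le_ncard {n : ℕ} {G : SimpleGraph V} {d : ℕ → ℕ} (hG : Realizes n G d)
    (hmono : ∀ i j : ℕ, 1 ≤ i → i ≤ j → j ≤ n → d i ≤ d j) {p D : ℕ} (hp : 1 ≤ p)
    {T : Set V} (hT : p ≤ T.ncard) (hdeg : ∀ v ∈ T, ndeg G v ≤ D) : d p ≤ D := by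
  obtain ⟨e, he⟩ := hG
  by_contra! hD
  have hidx : ∀ v ∈ T, (e.symm v).1 ∈ Set.Iio (p - 1) := by
    intro v hv
    by_contra! hge
    have hle := hmono p _ hp (by simp only [Set.mem_Iio] at hge; omega) (e.symm v).isLt
    rw [← he, Equiv.apply_symm_apply] at hle
    exact (hle.trans (hdeg v hv)).not_gt hD
  have := Set.ncard_le_ncard_of_injOn _ hidx
    (fun a _ b _ hab => e.symm.injective (Fin.val_injective hab))
  rw [Set.ncard_Iio_nat] at this
  omega

lemma Fintype.exists_two_largest {ι : Type*} [Fintype ι] (f : ι → ℕ) (hf : ∀ i, 1 ≤ f i)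
    (hι : 2 ≤ Fintype.card ι) :
    ∃ a b, (∀ c, f c ≤ f a) ∧ (∀ c ≠ a, f c ≤ f b) ∧
      f a + f b + (Fintype.card ι - 2) ≤ ∑ c, f c := by
  classical
  obtain ⟨a, -, ha⟩ := Finset.exists_max_image Finset.univ f
    (Finset.univ_nonempty_iff.mpr (Fintype.card_pos_iff.mp (by omega)))
  have hne : (Finset.univ.erase a).Nonempty := by
    rw [← Finset.card_pos, Finset.card_erase_of_mem (Finset.mem_univ a), Finset.card_univ]
    omega
  obtain ⟨b, hb, hbmax⟩ := Finset.exists_max_image _ f hne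
  have hab : b ≠ a := Finset.ne_of_mem_erase hb
  refine ⟨a, b, fun c => ha c (Finset.mem_univ c),
    fun c hc => hbmax c (Finset.mem_erase.mpr ⟨hc, Finset.mem_univ c⟩), ?_⟩
  have hcard : (Finset.univ \ {a, b}).card = Fintype.card ι - 2 := by
    rw [Finset.card_univ_sdiff, Finset.card_pair hab.symm]
  have hsplit : ∑ c ∈ Finset.univ \ {a, b}, f c + (f a + f b) = ∑ c, f c := by
    rw [← Finset.sum_pair hab.symm]
    exact Finset.sum_sdiff (Finset.subset_univ _)
  have hrest : Fintype.card ι - 2 ≤ ∑ c ∈ Finset.univ \ {a, b}, f c := by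
    rw [← hcard, Finset.card_eq_sum_ones]
    exact Finset.sum_le_sum fun c _ => hf c
  omega

lemma isTough_of_delComp_le_mul [Fintype V] {G : SimpleGraph V} {t : ℝ} {k : ℕ} (ht : 0 ≤ t)
    (hkt : t * k ≤ 1) (h : ∀ X : Set V, 1 < delComp G X → delComp G X ≤ k * X.ncard) :
    IsTough t G := by
  intro X hX
  have hle : (delComp G X : ℝ) ≤ k * X.card := by
    exact_mod_cast Set.ncard_coe_finset X ▸ h X hX
  calc t * delComp G X ≤ t * (k * X.card) := by gcongr
    _ = t * k * X.card := by ring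
    _ ≤ X.card := mul_le_of_le_one_left (Nat.cast_nonneg _) hkt

lemma Realizes.exists_cut_bounds {n : ℕ} {G : SimpleGraph V} {d : ℕ → ℕ}
    (hG : Realizes n G d) (hmono : ∀ i j : ℕ, 1 ≤ i → i ≤ j → j ≤ n → d i ≤ d j)
    (X : Set V) (hX : 1 < delComp G X) :
    ∃ cs cp : ℕ, 1 ≤ cp ∧ cp ≤ cs ∧ cs + cp + (delComp G X - 2) + X.ncard ≤ n ∧
      (∀ p, 1 ≤ p → p + cs + X.ncard ≤ n → d p + 1 ≤ X.ncard + cp) ∧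
      (∀ p, 1 ≤ p → p + X.ncard ≤ n → d p + 1 ≤ X.ncard + cs) := by
  classical
  obtain ⟨e, -⟩ := id hG
  have : Fintype V := Fintype.ofEquiv _ e
  have hV : Nat.card V = n := by rw [← Nat.card_congr e, Nat.card_fin]
  set H := G.induce Xᶜ
  have : Fintype H.ConnectedComponent := Fintype.ofFinite _
  set size : H.ConnectedComponent → ℕ := fun c => Nat.card c.supp
  have hsize : ∀ c, 1 ≤ size c := fun c => by
    obtain ⟨v, rfl⟩ := c.exists_rep
    exact Nat.one_le_iff_ne_zero.mpr (Nat.card_ne_zero.mpr ⟨⟨⟨v, rfl⟩⟩, inferInstance⟩)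
  have hcard : Fintype.card H.ConnectedComponent = delComp G X := Nat.card_eq_fintype_card.symm
  obtain ⟨Ks, Kp, hKs, hKp, hsum⟩ :=
    Fintype.exists_two_largest size hsize (hcard ▸ hX)
  have hdeg (v : V) (hv : v ∈ Xᶜ) :
      ndeg G v + 1 ≤ X.ncard + size (H.connectedComponentMk ⟨v, hv⟩) :=
    ndeg_add_one_le G X hv
  have hcompl : Xᶜ.ncard + X.ncard = n := by rw [Set.ncard_compl_add_ncard, hV]
  have htotal : ∑ c, size c = Xᶜ.ncard := by
    rw [ConnectedComponent.sum_card_supp, Nat.card_coe_set_eq]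
  refine ⟨size Ks, size Kp, hsize Kp, hKs Kp, by omega, fun p hp hpn => ?_, fun p hp hpn => ?_⟩
  · have hKsV : (Subtype.val '' Ks.supp).ncard = size Ks := by
      rw [Set.ncard_image_of_injective _ Subtype.val_injective]
      exact (Nat.card_coe_set_eq _).symm
    have hT : p ≤ (Xᶜ \ Subtype.val '' Ks.supp).ncard := by
      rw [Set.ncard_sdiff (by rintro _ ⟨u, -, rfl⟩; exact u.2), hKsV]
      omega
    have := hG.le_of_le_ncard hmono (D := X.ncard + size Kp - 1) hp hT fun v ⟨hv, hvKs⟩ => by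
      have hne : H.connectedComponentMk ⟨v, hv⟩ ≠ Ks := fun h => hvKs ⟨⟨v, hv⟩, h, rfl⟩
      have := hKp _ hne
      have := hdeg v hv
      omega
    have := hsize Kp
    omega
  · have := hG.le_of_le_ncard hmono (D := X.ncard + size Ks - 1) hp (T := Xᶜ) (by omega)
      fun v hv => by
        have := hKs (H.connectedComponentMk ⟨v, hv⟩)
        have := hdeg v hv
        omega
    have := hsize Ks
    omega

theorem stmt15_general (t : ℝ) (ht0 : 0 < t) (ht1 : t ≤ 1) (n : ℕ)
    (d : ℕ → ℕ)
    (hmono : ∀ i j : ℕ, 1 ≤ i → i ≤ j → j ≤ n → d i ≤ d j)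
    (hi : ∀ i : ℕ, ⌊1 / t⌋₊ ≤ i → 2 * i < n + ⌊1 / t⌋₊ - 1 →
      i - ⌊1 / t⌋₊ + 2 ≤ d i ∨ n - i ≤ d (n - i + ⌊1 / t⌋₊ - 1))
    (hii : ∀ i : ℕ, 1 ≤ i → 2 * i ≤ n → i ≤ d i ∨ n - i ≤ d n) :
    ∀ G : SimpleGraph (Fin n), Realizes n G d → IsTough t G := by
  intro G hG
  set k := ⌊1 / t⌋₊
  have hk : 1 ≤ k := Nat.le_floor (by simpa using one_le_one_div ht0 ht1)
  have hkt : t * k ≤ 1 := by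
    rw [mul_comm, ← le_div_iff₀ ht0]
    exact Nat.floor_le (by positivity)
  refine isTough_of_delComp_le_mul ht0.le hkt fun X hX => ?_
  obtain ⟨cs, cp, hcp, hcs, hsum, hsmall, hall⟩ := hG.exists_cut_bounds hmono X hX
  by_contra! hlt
  rcases Nat.eq_zero_or_pos X.ncard with hm | hm
  · have hd_cp := hsmall cp hcp (by omega)
    have hd_n := hall n (by omega) (by omega)
    rcases hii cp hcp (by omega) with h | h <;> omega
  · -- `(k - 1) (|X| - 1) ≥ 0`
    have hkm : k + X.ncard ≤ delComp G X := by nlinarith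
    set i := X.ncard + cp + k - 2
    have hd_i := hsmall i (by omega) (by omega)
    have hd_j := hall (n - i + k - 1) (by omega) (by omega)
    rcases hi i (by omega) (by omega) with h | h <;> omega

theorem stmt15 (t : ℝ) (ht0 : 0 < t) (ht1 : t ≤ 1) (n : ℕ)
    (hn : ⌊1 / t⌋₊ + 2 ≤ n)
    (d : ℕ → ℕ)
    (hmono : ∀ i j : ℕ, 1 ≤ i → i ≤ j → j ≤ n → d i ≤ d j)
    (hgraph : ∃ G : SimpleGraph (Fin n), Realizes n G d)
    (hi : ∀ i : ℕ, ⌊1 / t⌋₊ ≤ i → 2 * i < n + ⌊1 / t⌋₊ - 1 →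
      i - ⌊1 / t⌋₊ + 2 ≤ d i ∨ n - i ≤ d (n - i + ⌊1 / t⌋₊ - 1))
    (hii : ∀ i : ℕ, 1 ≤ i → 2 * i ≤ n → i ≤ d i ∨ n - i ≤ d n) :
    ∀ G : SimpleGraph (Fin n), Realizes n G d → IsTough t G :=
  stmt15_general t ht0 ht1 n d hmono hi hii
end

section
/- Let k ≥ 1 and x ≥ 1 be integers, and let a_1 ≤ a_2 ≤ ... ≤ a_{kx+1} be positive integers with n = x + Σ a_j. With i := x + k − 2 + a_{kx}, the graph G = K_x + (K_{a_1} ∪ ... ∪ K_{a_{kx+1}}) has at least i vertices of degree at most i − k + 1, i.e., the i-th smallest degree d_i of G satisfies d_i ≤ i − k + 1. -/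
open SimpleGraph

lemma deg_bound (x s : ℕ) (a : Fin s → ℕ) (ha : ∀ i, 1 ≤ a i)
    (j : Fin s) (u : Fin (a j)) :
    ndeg (JoinCliques x a) (Sum.inr ⟨j, u⟩) ≤ x + a j - 1 := by
  classical
  set f : (Fin x ⊕ Fin (a j)) → (Fin x ⊕ Σ i : Fin s, Fin (a i)) :=
    Sum.map id (fun u' => ⟨j, u'⟩) with hf
  have hfi : Function.Injective f := by
    intro p q hpq
    rcases p with p | p <;> rcases q with q | q <;>
      simp_all [hf, Sum.map]
  have hmem : Sum.inr ⟨j, u⟩ ∈ Set.range f := ⟨Sum.inr u, rfl⟩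
  have hsub : {w | (JoinCliques x a).Adj (Sum.inr ⟨j, u⟩) w} ⊆
      Set.range f \ {Sum.inr ⟨j, u⟩} := by
    intro w hw
    simp only [Set.mem_setOf_eq, JoinCliques, fromRel_adj] at hw
    obtain ⟨hne, hrel⟩ := hw
    refine ⟨?_, by simpa using hne.symm⟩
    rcases w with b | ⟨j', u'⟩
    · exact ⟨Sum.inl b, rfl⟩
    · have hj : j' = j := by
        rcases hrel with (⟨_, h⟩ | ⟨_, h⟩ | ⟨p, q, h1, h2, h3⟩) |
            (⟨_, h⟩ | ⟨_, h⟩ | ⟨p, q, h1, h2, h3⟩) <;>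
          first
            | exact absurd h (by simp)
            | (cases h1; cases h2; simpa using h3.symm)
            | (cases h1; cases h2; simpa using h3)
      subst hj
      exact ⟨Sum.inr u', rfl⟩
  have hcard : ndeg (JoinCliques x a) (Sum.inr ⟨j, u⟩) =
      {w | (JoinCliques x a).Adj (Sum.inr ⟨j, u⟩) w}.ncard := rfl
  rw [hcard]
  calc {w | (JoinCliques x a).Adj (Sum.inr ⟨j, u⟩) w}.ncard
      ≤ (Set.range f \ {Sum.inr ⟨j, u⟩}).ncard :=
        Set.ncard_le_ncard hsub (Set.toFinite _)
    _ = (Set.range f).ncard - 1 := Set.ncard_diff_singleton_of_mem hmem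
    _ ≤ x + a j - 1 := by
        have h1 : (Set.range f).ncard = x + a j := by
          rw [← Nat.card_coe_set_eq, Nat.card_range_of_injective hfi]
          simp
        omega

theorem stmt16 (k x : ℕ) (hk : 1 ≤ k) (hx : 1 ≤ x)
    (a : Fin (k * x + 1) → ℕ) (ha : ∀ i, 1 ≤ a i) (hmono : Monotone a)
    (n : ℕ) (hn : n = x + ∑ i, a i) :
    -- with `i = x + k - 2 + a_{kx}`, the graph has at least `i` vertices of degree
    -- at most `i - k + 1`
    x + k - 2 + a ⟨k * x - 1, lt_of_le_of_lt (Nat.sub_le _ _) (Nat.lt_succ_self _)⟩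
      ≤ Nat.card {v // ndeg (JoinCliques x a) v ≤
          (x + k - 2 + a ⟨k * x - 1, lt_of_le_of_lt (Nat.sub_le _ _) (Nat.lt_succ_self _)⟩)
            - k + 1} := by
  classical
  have hkx : 1 ≤ k * x := Nat.one_le_iff_ne_zero.mpr (by positivity)
  have hkx2 : x + k ≤ k * x + 1 := by nlinarith
  set jL : Fin (k * x + 1) :=
    ⟨k * x - 1, lt_of_le_of_lt (Nat.sub_le _ _) (Nat.lt_succ_self _)⟩ with hjL
  set B := x + k - 2 + a jL - k + 1 with hBdef
  have hf2 : ∀ p : (Σ j : Fin (k * x), Fin (a j.castSucc)),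
      ndeg (JoinCliques x a) (Sum.inr ⟨p.1.castSucc, p.2⟩) ≤ B := by
    intro p
    refine le_trans (deg_bound x _ a ha p.1.castSucc p.2) ?_
    have hle : p.1.castSucc ≤ jL := by
      rw [Fin.le_def]
      have := p.1.2
      simp [hjL]
      omega
    have h1 := hmono hle
    have h2 := ha p.1.castSucc
    have h3 := ha jL
    omega
  set f2 : (Σ j : Fin (k * x), Fin (a j.castSucc)) →
      {v // ndeg (JoinCliques x a) v ≤ B} :=
    fun p => ⟨Sum.inr ⟨p.1.castSucc, p.2⟩, hf2 p⟩ with hf2def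
  have hinj : Function.Injective f2 := by
    rintro ⟨j1, u1⟩ ⟨j2, u2⟩ h
    simp only [hf2def, Subtype.mk.injEq, Sum.inr.injEq] at h
    have h1 : j1.castSucc = j2.castSucc := congrArg Sigma.fst h
    have hj : j1 = j2 := Fin.castSucc_injective _ h1
    subst hj
    simpa using h
  have hle := Nat.card_le_card_of_injective f2 hinj
  have hcardT : Nat.card (Σ j : Fin (k * x), Fin (a j.castSucc)) =
      ∑ j : Fin (k * x), a j.castSucc := by
    simp [Nat.card_eq_fintype_card]
  set jlast : Fin (k * x) := ⟨k * x - 1, by omega⟩ with hjlast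
  have hcast : jlast.castSucc = jL := by
    apply Fin.ext; simp [hjlast, hjL]
  have hsum : k * x - 1 + a jL ≤ ∑ j : Fin (k * x), a j.castSucc := by
    have h1 : ∑ j ∈ Finset.univ.erase jlast, a j.castSucc + a jlast.castSucc
        = ∑ j : Fin (k * x), a j.castSucc :=
      Finset.sum_erase_add _ _ (Finset.mem_univ _)
    have h2 : (Finset.univ.erase jlast).card ≤
        ∑ j ∈ Finset.univ.erase jlast, a j.castSucc := by
      refine le_trans ?_ (Finset.sum_le_sum fun i _ => ha i.castSucc)
      simp
    have h3 : (Finset.univ.erase jlast).card = k * x - 1 := by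
      rw [Finset.card_erase_of_mem (Finset.mem_univ _)]
      simp
    rw [hcast] at h1
    omega
  calc x + k - 2 + a jL ≤ k * x - 1 + a jL := by omega
    _ ≤ ∑ j : Fin (k * x), a j.castSucc := hsum
    _ = Nat.card (Σ j : Fin (k * x), Fin (a j.castSucc)) := hcardT.symm
    _ ≤ _ := hle
end
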